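/- arXiv:math/0204195 — 8 statements merged into one kernel-verified Lean document; each statement's English description precedes it below -/
import Mathlib

section
/- Let S be a finite nonempty set and φ : ℕ → S a map. Then there exist a natural number N with 1 ≤ N ≤ |S| and an element s ∈ S such that the set {x ∈ ℕ : φ(x) = s and φ(x+N) = s} is infinite. -/
/-- Combinatorial lemma: for a finite nonempty set `S` and a map `φ : ℕ → S`, there are
`N` with `1 ≤ N ≤ #S` and `s ∈ S` such that `{x : φ x = s = φ (x + N)}` is infinite. -/
theorem exists_period_and_value_infinitely_often
    (S : Type*) [Fintype S] [Nonempty S] (φ : ℕ → S) :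
    ∃ (N : ℕ) (s : S), 1 ≤ N ∧ N ≤ Fintype.card S ∧
      {x : ℕ | φ x = s ∧ φ (x + N) = s}.Infinite := by
  by_contra h
  push_neg at h
  -- the union of all the candidate sets is finite
  set B : Set ℕ := ⋃ N ∈ Set.Icc 1 (Fintype.card S), ⋃ s : S,
      {x : ℕ | φ x = s ∧ φ (x + N) = s} with hB
  have hBfin : B.Finite := by
    refine Set.Finite.biUnion (Set.finite_Icc 1 (Fintype.card S)) fun N hN => ?_
    refine Set.finite_iUnion fun s => ?_
    rw [← Set.not_infinite]
    exact Set.not_infinite.mpr (h N s hN.1 hN.2)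
  obtain ⟨M, hM⟩ := hBfin.bddAbove
  -- pigeonhole at x = M + 1
  have hcard : Fintype.card S < (Finset.range (Fintype.card S + 1)).card := by
    simp
  obtain ⟨i, j, hij, heq⟩ := Fintype.exists_ne_map_eq_of_card_lt
    (fun i : Finset.range (Fintype.card S + 1) => φ (M + 1 + i)) (by simp)
  have key : ∀ a b : Finset.range (Fintype.card S + 1), (a : ℕ) < b →
      φ (M + 1 + a) = φ (M + 1 + b) → False := by
    intro a b hab habeq
    have ha : (a : ℕ) < Fintype.card S + 1 := Finset.mem_range.mp a.2
    have hb : (b : ℕ) < Fintype.card S + 1 := Finset.mem_range.mp b.2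
    have hmem : M + 1 + (a : ℕ) ∈ B := by
      refine Set.mem_biUnion (show (b : ℕ) - a ∈ Set.Icc 1 (Fintype.card S) from
        ⟨Nat.one_le_iff_ne_zero.mpr (Nat.sub_ne_zero_of_lt hab), by omega⟩) ?_
      refine Set.mem_iUnion.mpr ⟨φ (M + 1 + a), rfl, ?_⟩
      have : M + 1 + (a : ℕ) + ((b : ℕ) - a) = M + 1 + b := by omega
      rw [this]
      exact habeq.symm
    have := hM hmem
    omega
  rcases lt_or_gt_of_ne (fun hc => hij (Subtype.ext hc) : (i : ℕ) ≠ j) with hlt | hlt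
  · exact key i j hlt heq
  · exact key j i hlt heq.symm
end

section
/- Let K be a field and x ∈ K* with ρ_K(x) < ∞. Assume there are integers p ∈ ℤ and q ∈ ℤ \ {0} and an element β ∈ K* such that β^q·x^{-p} ∈ W_K. Then (p/q)·ρ_K(x) ∈ ℤ, i.e. q divides p·ρ_K(x). -/
/-- `y` is a root of unity in the field `K`. -/
def IsRootOfUnity {K : Type*} [Field K] (y : K) : Prop :=
  ∃ m : ℕ, 0 < m ∧ y ^ m = 1

/-- The set whose supremum is `ρ_K(x)`: natural numbers `n ≥ 1` such that some
`α ∈ K` satisfies `αⁿ·x⁻¹ ∈ W_K`. -/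
def rhoSet (K : Type*) [Field K] (x : K) : Set ℕ :=
  {n : ℕ | 0 < n ∧ ∃ α : K, IsRootOfUnity (α ^ n * x⁻¹)}

lemma isRootOfUnity_unit_iff {K : Type*} [Field K] (u : Kˣ) :
    IsRootOfUnity (u : K) ↔ IsOfFinOrder u := by
  rw [isOfFinOrder_iff_pow_eq_one]
  constructor
  · rintro ⟨m, hm, hmeq⟩
    exact ⟨m, hm, Units.ext (by simpa using hmeq)⟩
  · rintro ⟨m, hm, hmeq⟩
    exact ⟨m, hm, by rw [← Units.val_pow_eq_pow_val, hmeq, Units.val_one]⟩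

lemma fin_zpow {G : Type*} [Group G] {a : G} (h : IsOfFinOrder a) (k : ℤ) :
    IsOfFinOrder (a ^ k) := by
  rw [isOfFinOrder_iff_pow_eq_one] at h ⊢
  obtain ⟨m, hm, hmeq⟩ := h
  refine ⟨m, hm, ?_⟩
  rw [← zpow_natCast (a ^ k), ← zpow_mul, mul_comm, zpow_mul, zpow_natCast, hmeq, one_zpow]

lemma fin_of_zpow {G : Type*} [Group G] {a : G} {k : ℤ} (hk : k ≠ 0)
    (h : IsOfFinOrder (a ^ k)) : IsOfFinOrder a := by
  rw [isOfFinOrder_iff_pow_eq_one] at h ⊢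
  obtain ⟨m, hm, hmeq⟩ := h
  have hkm : a ^ (k * m) = 1 := by
    rw [zpow_mul, zpow_natCast] at *
    simpa using hmeq
  refine ⟨(k * m).natAbs, by positivity, ?_⟩
  have : a ^ (((k * m).natAbs : ℤ)) = 1 := by
    rcases Int.natAbs_eq (k * m) with h' | h'
    · rw [← h']; exact hkm
    · have : ((k * m).natAbs : ℤ) = -(k * m) := by omega
      rw [this, zpow_neg, hkm, inv_one]
  rwa [zpow_natCast] at this

/-- If `ρ_K(x) < ∞` and `β^q·x^{-p} ∈ W_K` for some `β ∈ K*`, `p ∈ ℤ`, `q ∈ ℤ \ {0}`,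
then `(p/q)·ρ_K(x) ∈ ℤ`, i.e. `q` divides `p·ρ_K(x)`. -/
theorem q_dvd_p_mul_rho
    (K : Type*) [Field K] (x : K) (hx : x ≠ 0)
    (hfin : BddAbove (rhoSet K x))
    (p q : ℤ) (hq : q ≠ 0) (β : K) (hβ : β ≠ 0)
    (h : IsRootOfUnity (β ^ q * x ^ (-p))) :
    q ∣ p * ((sSup (rhoSet K x) : ℕ) : ℤ) := by
  set X : Kˣ := Units.mk0 x hx with hX
  set B : Kˣ := Units.mk0 β hβ with hB
  have h1 : (1 : ℕ) ∈ rhoSet K x :=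
    ⟨one_pos, x, ⟨1, one_pos, by rw [pow_one, pow_one, mul_inv_cancel₀ hx]⟩⟩
  set ρ : ℕ := sSup (rhoSet K x) with hρdef
  have hρmem : ρ ∈ rhoSet K x := Nat.sSup_mem ⟨1, h1⟩ hfin
  obtain ⟨hρpos, α, hα⟩ := hρmem
  have hα0 : α ≠ 0 := by
    rintro rfl
    rw [zero_pow hρpos.ne', zero_mul] at hα
    obtain ⟨m, hm, hmeq⟩ := hα
    rw [zero_pow hm.ne'] at hmeq
    exact zero_ne_one hmeq
  set A : Kˣ := Units.mk0 α hα0 with hA0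
  have hAfin : IsOfFinOrder (A ^ (ρ : ℤ) * X⁻¹) := by
    rw [← isRootOfUnity_unit_iff]
    have : ((A ^ (ρ : ℤ) * X⁻¹ : Kˣ) : K) = α ^ ρ * x⁻¹ := by
      push_cast [hA0, hX]
      simp [zpow_natCast]
    rwa [this]
  have hBfin : IsOfFinOrder (B ^ q * X ^ (-p)) := by
    rw [← isRootOfUnity_unit_iff]
    have : ((B ^ q * X ^ (-p) : Kˣ) : K) = β ^ q * x ^ (-p) := by
      push_cast [hB, hX]
      simp
    rwa [this]
  -- set up gcd
  set t : ℤ := p * (ρ : ℤ) with ht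
  set d : ℕ := Int.gcd q t with hd
  have hdpos : 0 < d := Int.gcd_pos_of_ne_zero_left t hq
  obtain ⟨q', hq'⟩ : (d : ℤ) ∣ q := Int.gcd_dvd_left q t
  obtain ⟨t', ht'⟩ : (d : ℤ) ∣ t := Int.gcd_dvd_right q t
  have hq'0 : q' ≠ 0 := by rintro rfl; simp at hq'; exact hq hq'
  have hcop : IsCoprime q' t' := by
    rw [Int.isCoprime_iff_gcd_eq_one]
    have hdne : (d : ℤ) ≠ 0 := by exact_mod_cast hdpos.ne'
    have hq'' : q / (d : ℤ) = q' := by rw [hq']; exact Int.mul_ediv_cancel_left _ hdne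
    have ht'' : t / (d : ℤ) = t' := by rw [ht']; exact Int.mul_ediv_cancel_left _ hdne
    have h8 := Int.gcd_div_gcd_div_gcd (i := q) (j := t) (by exact_mod_cast hdpos)
    rw [← hd] at h8
    rwa [hq'', ht''] at h8
  obtain ⟨u, v, hbez⟩ := hcop
  -- key torsion facts
  have key1 : IsOfFinOrder (A ^ t * B ^ (-q)) := by
    have h2 := (fin_zpow hAfin p).mul hBfin.inv
    have heq : (A ^ (ρ : ℤ) * X⁻¹) ^ p * (B ^ q * X ^ (-p))⁻¹ = A ^ t * B ^ (-q) := by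
      rw [ht]
      apply Additive.ofMul.injective
      simp only [ofMul_mul, ofMul_zpow, ofMul_inv]
      module
    rwa [heq] at h2
  have key2 : IsOfFinOrder ((A ^ t' * B ^ (-q')) ^ (d : ℤ)) := by
    have heq : (A ^ t' * B ^ (-q')) ^ (d : ℤ) = A ^ t * B ^ (-q) := by
      rw [hq', ht']
      apply Additive.ofMul.injective
      simp only [ofMul_mul, ofMul_zpow, ofMul_inv]
      module
    rwa [heq]
  have key3 : IsOfFinOrder (A ^ t' * B ^ (-q')) :=
    fin_of_zpow (by exact_mod_cast hdpos.ne') key2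
  set C : Kˣ := A ^ u * B ^ v with hC
  have key4 : IsOfFinOrder (A * (C ^ q')⁻¹) := by
    have h3 := fin_zpow key3 v
    have heq : (A ^ t' * B ^ (-q')) ^ v = A * (C ^ q')⁻¹ := by
      rw [hC]
      apply Additive.ofMul.injective
      simp only [ofMul_mul, ofMul_zpow, ofMul_inv]
      match_scalars
      · linear_combination hbez
      · ring
    rwa [heq] at h3
  have key5 : IsOfFinOrder (C ^ ((ρ : ℤ) * q') * X⁻¹) := by
    have h4 := (fin_zpow key4.inv ρ).mul hAfin
    have heq : ((A * (C ^ q')⁻¹)⁻¹) ^ (ρ : ℤ) * (A ^ (ρ : ℤ) * X⁻¹) =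
        C ^ ((ρ : ℤ) * q') * X⁻¹ := by
      apply Additive.ofMul.injective
      simp only [ofMul_mul, ofMul_zpow, ofMul_inv]
      module
    rwa [heq] at h4
  -- build element of rhoSet
  set n : ℕ := ρ * q'.natAbs with hn
  set D : Kˣ := if 0 ≤ q' then C else C⁻¹ with hD
  have hDn : D ^ (n : ℤ) = C ^ ((ρ : ℤ) * q') := by
    by_cases hsgn : 0 ≤ q'
    · have : (n : ℤ) = (ρ : ℤ) * q' := by
        rw [hn]; push_cast [Int.natAbs_of_nonneg hsgn]; ring
      rw [hD, if_pos hsgn, this]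
    · have : (n : ℤ) = -((ρ : ℤ) * q') := by
        rw [hn]; push_cast [Int.ofNat_natAbs_of_nonpos (le_of_not_ge hsgn)]; ring
      rw [hD, if_neg hsgn, inv_zpow, ← zpow_neg, this, neg_neg]
  have hfinD : IsOfFinOrder (D ^ n * X⁻¹) := by
    have hDn' : D ^ n = C ^ ((ρ : ℤ) * q') := by rw [← zpow_natCast, hDn]
    rw [hDn']; exact key5
  have hnmem : n ∈ rhoSet K x := by
    refine ⟨by positivity, (D : K), ?_⟩
    have hcast : (D : K) ^ n * x⁻¹ = ((D ^ n * X⁻¹ : Kˣ) : K) := by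
      push_cast [hX]; simp
    rw [hcast]
    exact (isRootOfUnity_unit_iff _).mpr hfinD
  have hle : n ≤ ρ := le_csSup hfin hnmem
  have habs : q'.natAbs = 1 := by
    have h5 : ρ * q'.natAbs ≤ ρ * 1 := by simpa [hn] using hle
    have h6 := Nat.le_of_mul_le_mul_left h5 hρpos
    have h7 : q'.natAbs ≠ 0 := Int.natAbs_ne_zero.mpr hq'0
    omega
  have hu : IsUnit q' := Int.isUnit_iff_natAbs_eq.mpr habs
  show q ∣ t
  rw [ht', hq']
  exact mul_dvd_mul_left _ hu.dvd
end

section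
/- Let L/K be a finite field extension of degree d and let x ∈ K* with ρ_K(x) < ∞. Then there exists a natural number s dividing d such that ρ_L(x) = s·ρ_K(x). -/
section aux

variable {K : Type*} [Field K]

lemma IsRootOfUnity.ne_zero {y : K} (h : IsRootOfUnity y) : y ≠ 0 := by
  obtain ⟨m, hm, h1⟩ := h
  intro h0
  rw [h0, zero_pow hm.ne'] at h1
  exact zero_ne_one h1

lemma IsRootOfUnity.one : IsRootOfUnity (1 : K) := ⟨1, one_pos, one_pow 1⟩

lemma IsRootOfUnity.mul {y z : K} (hy : IsRootOfUnity y) (hz : IsRootOfUnity z) :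
    IsRootOfUnity (y * z) := by
  obtain ⟨a, ha, hya⟩ := hy
  obtain ⟨b, hb, hzb⟩ := hz
  refine ⟨a * b, Nat.mul_pos ha hb, ?_⟩
  rw [mul_pow, pow_mul, hya, one_pow, mul_comm a b, pow_mul, hzb, one_pow, one_mul]

lemma IsRootOfUnity.zpow {y : K} (h : IsRootOfUnity y) (j : ℤ) : IsRootOfUnity (y ^ j) := by
  obtain ⟨m, hm, h1⟩ := h
  refine ⟨m, hm, ?_⟩
  rw [← zpow_natCast (y ^ j), ← zpow_mul, mul_comm, zpow_mul, zpow_natCast, h1, one_zpow]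

lemma IsRootOfUnity.pow {y : K} (h : IsRootOfUnity y) (j : ℕ) : IsRootOfUnity (y ^ j) := by
  have := h.zpow (j : ℤ)
  rwa [zpow_natCast] at this

lemma IsRootOfUnity.of_pow {y : K} {e : ℕ} (he : 0 < e) (h : IsRootOfUnity (y ^ e)) :
    IsRootOfUnity y := by
  obtain ⟨m, hm, h1⟩ := h
  exact ⟨e * m, Nat.mul_pos he hm, by rw [pow_mul, h1]⟩

lemma mem_rhoSet_iff {x : K} (hx : x ≠ 0) {n : ℕ} :
    n ∈ rhoSet K x ↔ 0 < n ∧ ∃ α ζ : K, IsRootOfUnity ζ ∧ α ^ n = ζ * x := by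
  constructor
  · rintro ⟨hn, α, hα⟩
    exact ⟨hn, α, α ^ n * x⁻¹, hα, by field_simp⟩
  · rintro ⟨hn, α, ζ, hζ, hαζ⟩
    refine ⟨hn, α, ?_⟩
    rw [hαζ, mul_assoc, mul_inv_cancel₀ hx, mul_one]
    exact hζ

/-- Key computation: if `y^N = u·x^P` and `z^N = v·x^Q` with `P·a + Q·b = 1`,
then `(y^a·z^b)^N = u^a·v^b·x`. -/
lemma key_calc {y z x u v : K} (hx : x ≠ 0) (hy0 : y ≠ 0) (hz0 : z ≠ 0)
    {N P Q : ℕ} (a b : ℤ) (hbez : (P : ℤ) * a + (Q : ℤ) * b = 1)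
    (hy : y ^ N = u * x ^ P) (hz : z ^ N = v * x ^ Q) :
    (y ^ a * z ^ b) ^ N = u ^ a * v ^ b * x := by
  have hyz : y ^ (N : ℤ) = u * x ^ (P : ℤ) := by
    rw [zpow_natCast, zpow_natCast]; exact hy
  have hzz : z ^ (N : ℤ) = v * x ^ (Q : ℤ) := by
    rw [zpow_natCast, zpow_natCast]; exact hz
  have e1 : (y ^ a) ^ (N : ℤ) = (u * x ^ (P : ℤ)) ^ a := by
    rw [← zpow_mul, mul_comm a, zpow_mul, hyz]
  have e2 : (z ^ b) ^ (N : ℤ) = (v * x ^ (Q : ℤ)) ^ b := by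
    rw [← zpow_mul, mul_comm b, zpow_mul, hzz]
  calc (y ^ a * z ^ b) ^ N
      = (y ^ a * z ^ b) ^ (N : ℤ) := (zpow_natCast _ N).symm
    _ = (y ^ a) ^ (N : ℤ) * (z ^ b) ^ (N : ℤ) := mul_zpow _ _ _
    _ = (u * x ^ (P : ℤ)) ^ a * (v * x ^ (Q : ℤ)) ^ b := by rw [e1, e2]
    _ = u ^ a * v ^ b * x ^ ((P : ℤ) * a + (Q : ℤ) * b) := by
        rw [mul_zpow, mul_zpow, zpow_add₀ hx, ← zpow_mul, ← zpow_mul]; ring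
    _ = u ^ a * v ^ b * x := by rw [hbez, zpow_one]

lemma one_mem_rhoSet {x : K} (hx : x ≠ 0) : 1 ∈ rhoSet K x :=
  (mem_rhoSet_iff hx).2 ⟨one_pos, x, 1, IsRootOfUnity.one, by rw [pow_one, one_mul]⟩

lemma lcm_mem_rhoSet {x : K} (hx : x ≠ 0) {n m : ℕ}
    (hn : n ∈ rhoSet K x) (hm : m ∈ rhoSet K x) : Nat.lcm n m ∈ rhoSet K x := by
  obtain ⟨hn0, α, ζ, hζ, hα⟩ := (mem_rhoSet_iff hx).1 hn
  obtain ⟨hm0, β, ξ, hξ, hβ⟩ := (mem_rhoSet_iff hx).1 hm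
  set g := Nat.gcd n m with hg
  have hg0 : 0 < g := Nat.gcd_pos_of_pos_left m hn0
  set n' := n / g with hn'
  set m' := m / g with hm'
  have hcop : Nat.Coprime n' m' := Nat.coprime_div_gcd_div_gcd hg0
  have hlcm_n : Nat.lcm n m = n * m' := by
    rw [Nat.lcm, hm', Nat.mul_div_assoc n (Nat.gcd_dvd_right n m)]
  have hlcm_m : Nat.lcm n m = m * n' := by
    rw [Nat.lcm_comm, Nat.lcm, Nat.gcd_comm m n, hn', Nat.mul_div_assoc m (Nat.gcd_dvd_left n m)]
  have hα0 : α ≠ 0 := by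
    intro h0
    rw [h0, zero_pow hn0.ne'] at hα
    exact hζ.ne_zero (by rw [eq_comm, mul_eq_zero] at hα; tauto)
  have hβ0 : β ≠ 0 := by
    intro h0
    rw [h0, zero_pow hm0.ne'] at hβ
    exact hξ.ne_zero (by rw [eq_comm, mul_eq_zero] at hβ; tauto)
  -- Bezout
  have hbez : (m' : ℤ) * Int.gcdA m' n' + (n' : ℤ) * Int.gcdB m' n' = 1 := by
    have := Int.gcd_eq_gcd_ab (m' : ℤ) (n' : ℤ)
    rwa [Int.gcd_natCast_natCast, Nat.Coprime.gcd_eq_one hcop.symm, Nat.cast_one, eq_comm] at this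
  set a := Int.gcdA m' n'
  set b := Int.gcdB m' n'
  have hαl : α ^ (Nat.lcm n m) = ζ ^ m' * x ^ m' := by
    rw [hlcm_n, pow_mul, hα, mul_pow]
  have hβl : β ^ (Nat.lcm n m) = ξ ^ n' * x ^ n' := by
    rw [hlcm_m, pow_mul, hβ, mul_pow]
  have hkey := key_calc hx hα0 hβ0 a b hbez hαl hβl
  have hl0 : 0 < Nat.lcm n m := Nat.pos_of_ne_zero (Nat.lcm_ne_zero hn0.ne' hm0.ne')
  refine (mem_rhoSet_iff hx).2 ⟨hl0, α ^ a * β ^ b, (ζ ^ m') ^ a * (ξ ^ n') ^ b, ?_, hkey⟩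
  exact ((hζ.pow m').zpow a).mul ((hξ.pow n').zpow b)

lemma dvd_sSup_rhoSet {x : K} (hx : x ≠ 0) (hb : BddAbove (rhoSet K x)) {n : ℕ}
    (hn : n ∈ rhoSet K x) : n ∣ sSup (rhoSet K x) := by
  have hmem : sSup (rhoSet K x) ∈ rhoSet K x := Nat.sSup_mem ⟨n, hn⟩ hb
  have hlcm := lcm_mem_rhoSet hx hn hmem
  have hle : Nat.lcm n (sSup (rhoSet K x)) ≤ sSup (rhoSet K x) := le_csSup hb hlcm
  have hdvd : sSup (rhoSet K x) ∣ Nat.lcm n (sSup (rhoSet K x)) := Nat.dvd_lcm_right _ _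
  have heq : Nat.lcm n (sSup (rhoSet K x)) = sSup (rhoSet K x) :=
    le_antisymm hle (Nat.le_of_dvd hlcm.1 hdvd)
  exact heq ▸ Nat.dvd_lcm_left n (sSup (rhoSet K x))

/-- Descent: if `γ^n = u·x^d` with `u` a root of unity, then `n / gcd n d ∈ rhoSet K x`. -/
lemma descend {x : K} (hx : x ≠ 0) {d n : ℕ} (hd : 0 < d) (hn : 0 < n)
    {γ u : K} (hu : IsRootOfUnity u) (h : γ ^ n = u * x ^ d) :
    n / Nat.gcd n d ∈ rhoSet K x := by
  set g := Nat.gcd n d with hg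
  have hg0 : 0 < g := Nat.gcd_pos_of_pos_left d hn
  set n' := n / g with hn'
  set d' := d / g with hd'
  have hn'0 : 0 < n' := Nat.div_pos (Nat.le_of_dvd hn (Nat.gcd_dvd_left n d)) hg0
  have hcop : Nat.Coprime n' d' := Nat.coprime_div_gcd_div_gcd hg0
  have hγ0 : γ ≠ 0 := by
    intro h0
    rw [h0, zero_pow hn.ne'] at h
    exact hu.ne_zero (by
      rcases mul_eq_zero.1 h.symm with h' | h'
      · exact h'
      · exact absurd h' (pow_ne_zero d hx))
  -- w := γ^{n'} / x^{d'} is a root of unity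
  have hng : n' * g = n := Nat.div_mul_cancel (Nat.gcd_dvd_left n d)
  have hdg : d' * g = d := Nat.div_mul_cancel (Nat.gcd_dvd_right n d)
  have hwpow : (γ ^ n' * (x ^ d')⁻¹) ^ g = u := by
    rw [mul_pow, ← pow_mul, hng, inv_pow, ← pow_mul, hdg, h, mul_assoc,
      mul_inv_cancel₀ (pow_ne_zero d hx), mul_one]
  have hw : IsRootOfUnity (γ ^ n' * (x ^ d')⁻¹) :=
    IsRootOfUnity.of_pow hg0 (hwpow ▸ hu)
  set w := γ ^ n' * (x ^ d')⁻¹ with hwdef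
  have hγn' : γ ^ n' = w * x ^ d' := by
    rw [hwdef, mul_assoc, inv_mul_cancel₀ (pow_ne_zero d' hx), mul_one]
  -- Bezout for n', d'
  have hbez : (d' : ℤ) * Int.gcdA d' n' + (n' : ℤ) * Int.gcdB d' n' = 1 := by
    have := Int.gcd_eq_gcd_ab (d' : ℤ) (n' : ℤ)
    rwa [Int.gcd_natCast_natCast, Nat.Coprime.gcd_eq_one hcop.symm, Nat.cast_one, eq_comm] at this
  have hxx : x ^ n' = (1 : K) * x ^ n' := (one_mul _).symm
  have hkey := key_calc hx hγ0 hx (Int.gcdA d' n') (Int.gcdB d' n') hbez hγn' hxx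
  refine (mem_rhoSet_iff hx).2 ⟨hn'0, γ ^ Int.gcdA d' n' * x ^ Int.gcdB d' n',
    w ^ Int.gcdA d' n' * (1 : K) ^ Int.gcdB d' n', ?_, hkey⟩
  exact (hw.zpow _).mul (IsRootOfUnity.one.zpow _)

end aux

/-- If `L/K` is a finite field extension of degree `d`, `x ∈ K*` and `ρ_K(x) < ∞`,
then `ρ_L(x) = s·ρ_K(x)` for some natural number `s` dividing `d`. -/
theorem rho_of_finite_extension
    (K L : Type*) [Field K] [Field L] [Algebra K L] [FiniteDimensional K L]
    (x : K) (hx : x ≠ 0) (hfin : BddAbove (rhoSet K x)) :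
    ∃ s : ℕ, s ∣ Module.finrank K L ∧
      BddAbove (rhoSet L (algebraMap K L x)) ∧
      sSup (rhoSet L (algebraMap K L x)) = s * sSup (rhoSet K x) := by
  set d := Module.finrank K L with hddef
  have hd : 0 < d := Module.finrank_pos
  have hxL : algebraMap K L x ≠ 0 := fun h => hx ((algebraMap K L).injective (by rwa [map_zero]))
  -- descent from L to K
  have hdesc : ∀ n ∈ rhoSet L (algebraMap K L x), n / Nat.gcd n d ∈ rhoSet K x := by
    intro n hn
    obtain ⟨hn0, α, ζ, hζ, hα⟩ := (mem_rhoSet_iff hxL).1 hn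
    have hNζ : IsRootOfUnity (Algebra.norm K ζ) := by
      obtain ⟨m, hm, hζm⟩ := hζ
      exact ⟨m, hm, by rw [← map_pow, hζm, map_one]⟩
    have hnorm : (Algebra.norm K α) ^ n = Algebra.norm K ζ * x ^ d := by
      rw [← map_pow, hα, map_mul, Algebra.norm_algebraMap]
    exact descend hx hd hn0 hNζ hnorm
  -- sSup of rhoSet K x
  have hne : (rhoSet K x).Nonempty := ⟨1, one_mem_rhoSet hx⟩
  set r := sSup (rhoSet K x) with hrdef
  have hrmem : r ∈ rhoSet K x := Nat.sSup_mem hne hfin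
  have hr0 : 0 < r := hrmem.1
  -- boundedness of rhoSet L
  have hBL : BddAbove (rhoSet L (algebraMap K L x)) := by
    refine ⟨r * d, fun n hn => ?_⟩
    have h1 := hdesc n hn
    have h2 : n / Nat.gcd n d ≤ r := le_csSup hfin h1
    have h3 : Nat.gcd n d ≤ d := Nat.le_of_dvd hd (Nat.gcd_dvd_right n d)
    have h4 : n / Nat.gcd n d * Nat.gcd n d = n := Nat.div_mul_cancel (Nat.gcd_dvd_left n d)
    calc n = n / Nat.gcd n d * Nat.gcd n d := h4.symm
      _ ≤ r * d := Nat.mul_le_mul h2 h3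
  -- r ∈ rhoSet L
  have hrL_mem : r ∈ rhoSet L (algebraMap K L x) := by
    obtain ⟨hr0', α, ζ, hζ, hα⟩ := (mem_rhoSet_iff hx).1 hrmem
    refine (mem_rhoSet_iff hxL).2 ⟨hr0', algebraMap K L α, algebraMap K L ζ, ?_, ?_⟩
    · obtain ⟨m, hm, hζm⟩ := hζ
      exact ⟨m, hm, by rw [← map_pow, hζm, map_one]⟩
    · rw [← map_pow, hα, map_mul]
  set rL := sSup (rhoSet L (algebraMap K L x)) with hrLdef
  have hrLmem : rL ∈ rhoSet L (algebraMap K L x) :=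
    Nat.sSup_mem ⟨r, hrL_mem⟩ hBL
  -- r divides rL
  have hr_dvd_rL : r ∣ rL := dvd_sSup_rhoSet hxL hBL hrL_mem
  obtain ⟨s, hs⟩ := hr_dvd_rL
  -- m' := rL / gcd rL d divides r
  have hm'_mem : rL / Nat.gcd rL d ∈ rhoSet K x := hdesc rL hrLmem
  have hm'_dvd_r : rL / Nat.gcd rL d ∣ r := dvd_sSup_rhoSet hx hfin hm'_mem
  have hm'0 : 0 < rL / Nat.gcd rL d := hm'_mem.1
  obtain ⟨t, ht⟩ := hm'_dvd_r
  set m' := rL / Nat.gcd rL d with hm'def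
  have hm'g : m' * Nat.gcd rL d = rL := Nat.div_mul_cancel (Nat.gcd_dvd_left rL d)
  -- show s ∣ gcd rL d
  have hst : s * t = Nat.gcd rL d := by
    have h1 : m' * (s * t) = m' * Nat.gcd rL d := by
      rw [hm'g]
      calc m' * (s * t) = (m' * t) * s := by ring
        _ = r * s := by rw [← ht]
        _ = rL := by rw [hs, mul_comm]
    exact Nat.eq_of_mul_eq_mul_left hm'0 h1
  have hsd : s ∣ d := dvd_trans (Dvd.intro t hst) (Nat.gcd_dvd_right rL d)
  exact ⟨s, hsd, hBL, hs.trans (mul_comm r s)⟩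
end

section
/- There is no element A ∈ SL₂(ℂ) such that for every B ∈ SL₂(ℝ), the matrix ABA⁻¹ = (a b; c d) satisfies |a·d| ∈ {0,1} (where a and d denote the diagonal entries of ABA⁻¹). -/
open Complex in
private lemma step_conj {t x y m : ℂ} (ht : starRingEnd ℂ t = t)
    (hx : x = 1 - t * m) (hy : y = 1 + t * m)
    (h : (x = 0 ∨ y = 0) ∨ ‖x‖ * ‖y‖ = 1) :
    1 - t ^ 2 * m ^ 2 = 0 ∨
      (1 - t ^ 2 * m ^ 2) * (1 - t ^ 2 * (starRingEnd ℂ m) ^ 2) = 1 := by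
  rcases h with (h | h) | h
  · left; rw [hx] at h; linear_combination (1 + t * m) * h
  · left; rw [hy] at h; linear_combination (1 - t * m) * h
  · right
    have hxy : x * y = 1 - t ^ 2 * m ^ 2 := by rw [hx, hy]; ring
    have habs : ‖x * y‖ = 1 := by rw [norm_mul]; exact h
    have h2 : (x * y) * starRingEnd ℂ (x * y) = 1 := by
      rw [Complex.mul_conj]
      norm_cast
      rw [← Complex.sq_norm, habs]; norm_num
    rw [hxy] at h2
    have hc : starRingEnd ℂ (1 - t ^ 2 * m ^ 2) = 1 - t ^ 2 * (starRingEnd ℂ m) ^ 2 := by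
      simp [map_sub, map_mul, map_pow, ht]
    rw [hc] at h2
    exact h2

private lemma aux_zero {m : ℂ}
    (h1 : 1 - (1:ℂ) ^ 2 * m ^ 2 = 0 ∨
      (1 - (1:ℂ) ^ 2 * m ^ 2) * (1 - (1:ℂ) ^ 2 * (starRingEnd ℂ m) ^ 2) = 1)
    (h2 : 1 - (2:ℂ) ^ 2 * m ^ 2 = 0 ∨
      (1 - (2:ℂ) ^ 2 * m ^ 2) * (1 - (2:ℂ) ^ 2 * (starRingEnd ℂ m) ^ 2) = 1)
    (h3 : 1 - (3:ℂ) ^ 2 * m ^ 2 = 0 ∨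
      (1 - (3:ℂ) ^ 2 * m ^ 2) * (1 - (3:ℂ) ^ 2 * (starRingEnd ℂ m) ^ 2) = 1) :
    m = 0 := by
  have key : m ^ 2 * (starRingEnd ℂ m) ^ 2 = 0 := by
    rcases h1 with h1 | h1
    · rcases h2 with h2 | h2
      · exfalso
        have : (3:ℂ) = 0 := by linear_combination 4 * h1 - h2
        norm_num at this
      · rcases h3 with h3 | h3
        · exfalso
          have : (8:ℂ) = 0 := by linear_combination 9 * h1 - h3
          norm_num at this
        · linear_combination (-1/20) * h2 + (1/45) * h3
    · rcases h2 with h2 | h2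
      · rcases h3 with h3 | h3
        · exfalso
          have : (5:ℂ) = 0 := by linear_combination 9 * h2 - 4 * h3
          norm_num at this
        · linear_combination (-9/72) * h1 + (1/72) * h3
      · linear_combination (-4/12) * h1 + (1/12) * h2
  have h4 : (m * starRingEnd ℂ m) ^ 2 = 0 := by linear_combination key
  have h5 : m * starRingEnd ℂ m = 0 := by
    exact (pow_eq_zero_iff two_ne_zero).mp h4
  rw [Complex.mul_conj] at h5
  have := Complex.normSq_eq_zero.mp (by exact_mod_cast h5)
  exact this

/-- There is no `A ∈ SL₂(ℂ)` such that every conjugate `A·B·A⁻¹` of an element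
`B ∈ SL₂(ℝ)` has `|a·d| ∈ {0,1}`, where `a, d` are the diagonal entries. -/
theorem no_conjugate_of_SL2R_with_unimodular_diagonal_product :
    ¬ ∃ A : Matrix.SpecialLinearGroup (Fin 2) ℂ,
      ∀ B : Matrix.SpecialLinearGroup (Fin 2) ℝ,
        ‖(((A * Matrix.SpecialLinearGroup.map Complex.ofRealHom B * A⁻¹ :
              Matrix.SpecialLinearGroup (Fin 2) ℂ) : Matrix (Fin 2) (Fin 2) ℂ) 0 0 *
           ((A * Matrix.SpecialLinearGroup.map Complex.ofRealHom B * A⁻¹ :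
              Matrix.SpecialLinearGroup (Fin 2) ℂ) : Matrix (Fin 2) (Fin 2) ℂ) 1 1)‖
          ∈ ({0, 1} : Set ℝ) := by
  rintro ⟨A, h⟩
  have hm : ∀ B : Matrix.SpecialLinearGroup (Fin 2) ℝ,
      ((A * Matrix.SpecialLinearGroup.map Complex.ofRealHom B * A⁻¹ :
        Matrix.SpecialLinearGroup (Fin 2) ℂ) : Matrix (Fin 2) (Fin 2) ℂ) =
        (A : Matrix (Fin 2) (Fin 2) ℂ) * (B : Matrix (Fin 2) (Fin 2) ℝ).map Complex.ofRealHom *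
          ((A⁻¹ : Matrix.SpecialLinearGroup (Fin 2) ℂ) : Matrix (Fin 2) (Fin 2) ℂ) := fun B => rfl
  simp only [hm] at h
  set p := (A : Matrix (Fin 2) (Fin 2) ℂ) 0 0 with hp
  set q := (A : Matrix (Fin 2) (Fin 2) ℂ) 0 1 with hq
  set r := (A : Matrix (Fin 2) (Fin 2) ℂ) 1 0 with hr
  set s := (A : Matrix (Fin 2) (Fin 2) ℂ) 1 1 with hs
  have hdet : p * s - q * r = 1 := by
    have := A.2
    rw [Matrix.det_fin_two] at this
    exact this
  -- upper and lower triangular families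
  have u1 := h ⟨!![1,1;0,1], by simp [Matrix.det_fin_two_of]⟩
  have u2 := h ⟨!![1,2;0,1], by simp [Matrix.det_fin_two_of]⟩
  have u3 := h ⟨!![1,3;0,1], by simp [Matrix.det_fin_two_of]⟩
  have l1 := h ⟨!![1,0;1,1], by simp [Matrix.det_fin_two_of]⟩
  have l2 := h ⟨!![1,0;2,1], by simp [Matrix.det_fin_two_of]⟩
  have l3 := h ⟨!![1,0;3,1], by simp [Matrix.det_fin_two_of]⟩
  have f := h ⟨!![1,1;1,2], by norm_num [Matrix.det_fin_two_of]⟩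
  simp [Matrix.SpecialLinearGroup.coe_mul, Matrix.SpecialLinearGroup.coe_inv,
    Matrix.adjugate_fin_two, Matrix.mul_apply, Fin.sum_univ_two,
    Matrix.SpecialLinearGroup.map_apply_coe, RingHom.mapMatrix_apply, Matrix.map_apply,
    Matrix.cons_val_zero, Matrix.cons_val_one, Matrix.head_cons, Matrix.head_fin_const,
    Matrix.cons_val', Matrix.empty_val', Matrix.cons_val_fin_one, map_one,
    Complex.ofRealHom_eq_coe, Complex.ofReal_one, Complex.ofReal_zero,
    Complex.ofReal_ofNat, ← hp, ← hq, ← hr, ← hs] at u1 u2 u3 l1 l2 l3 f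
  have d1 := step_conj (t := 1) (m := p*r) (by simp)
    (by linear_combination hdet) (by linear_combination hdet) u1
  have d2 := step_conj (t := 2) (m := p*r) (map_ofNat _ 2)
    (by linear_combination hdet) (by linear_combination hdet) u2
  have d3 := step_conj (t := 3) (m := p*r) (map_ofNat _ 3)
    (by linear_combination hdet) (by linear_combination hdet) u3
  have e1 := step_conj (t := 1) (m := -(q*s)) (by simp)
    (by linear_combination hdet) (by linear_combination hdet) l1
  have e2 := step_conj (t := 2) (m := -(q*s)) (map_ofNat _ 2)
    (by linear_combination hdet) (by linear_combination hdet) l2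
  have e3 := step_conj (t := 3) (m := -(q*s)) (map_ofNat _ 3)
    (by linear_combination hdet) (by linear_combination hdet) l3
  have hpr : p * r = 0 := aux_zero d1 d2 d3
  have hqs : q * s = 0 := by
    have := aux_zero e1 e2 e3
    exact neg_eq_zero.mp this
  have h4 : q * r * (q * r + 1) = 0 := by
    linear_combination (-(q*r)) * hdet + (q*s) * hpr
  have fx : (p + q) * s + -((p + q * 2) * r) = 1 - q * r := by
    linear_combination hdet + hqs - hpr
  have fy : -((r + s) * q) + (r + s * 2) * p = 2 + q * r := by
    linear_combination 2 * hdet + hpr - hqs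
  rw [fx, fy] at f
  rcases f with (h0 | h0) | h0
  · have : (2:ℂ) = 0 := by linear_combination h4 + (q*r + 2) * h0
    norm_num at this
  · have : (2:ℂ) = 0 := by linear_combination h4 - (q*r - 1) * h0
    norm_num at this
  · have hxy2 : (1 - q*r) * (2 + q*r) = 2 := by linear_combination -h4
    have habs : ‖(1 - q*r) * (2 + q*r)‖ = 1 := by
      rw [norm_mul]; exact h0
    rw [hxy2] at habs
    norm_num at habs
end

section
/- Let Λ and Γ be lattices in ℂ, and set Λ_ℚ = Λ ⊗_ℤ ℚ and Γ_ℚ = Γ ⊗_ℤ ℚ. Let Φ : Λ_ℚ ⊗_ℚ Γ_ℚ → ℂ be the ℚ-linear map induced by multiplication via the inclusions Λ ↪ ℂ and Γ ↪ ℂ (so that Φ(x ⊗ y) = x·y for x ∈ Λ, y ∈ Γ). Then the lattices Λ and Γ are isogenous if and only if the kernel of Φ is nonzero. Equivalently, writing Λ = ℤα + ℤβ and Γ = ℤγ + ℤδ, they are isogenous if and only if there exists (a,b,c,d) ∈ ℚ⁴ \ {0} with a·αγ + b·αδ + c·βγ + d·βδ = 0. -/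
/-- Rational linear independence from real linear independence. -/
lemma ratIndepAux {x y : ℂ} (h : LinearIndependent ℝ ![x, y]) :
    ∀ p q : ℚ, (p : ℂ) * x + (q : ℂ) * y = 0 → p = 0 ∧ q = 0 := by
  intro p q hpq
  have h2 := (LinearIndependent.pair_iff.mp h) (p : ℝ) (q : ℝ) ?_
  · exact ⟨by exact_mod_cast h2.1, by exact_mod_cast h2.2⟩
  · rw [Complex.real_smul, Complex.real_smul]
    push_cast
    exact hpq

/-- If `u` is a rational combination of `x` and `y`, some nonzero integer multiple of `u`
lies in the subgroup generated by `x` and `y`. -/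
lemma zsmul_mem_closure_pair (x y u : ℂ) (p q : ℚ)
    (h : u = (p : ℂ) * x + (q : ℂ) * y) :
    ∃ n : ℤ, n ≠ 0 ∧ n • u ∈ AddSubgroup.closure ({x, y} : Set ℂ) := by
  refine ⟨(p.den : ℤ) * (q.den : ℤ), ?_, ?_⟩
  · exact mul_ne_zero (by exact_mod_cast p.den_nz) (by exact_mod_cast q.den_nz)
  · rw [AddSubgroup.mem_closure_pair]
    refine ⟨p.num * q.den, q.num * p.den, ?_⟩
    have hp : (p : ℂ) * (p.den : ℂ) = (p.num : ℂ) := by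
      exact_mod_cast congrArg (Rat.cast : ℚ → ℂ) (Rat.mul_den_eq_num p)
    have hq : (q : ℂ) * (q.den : ℂ) = (q.num : ℂ) := by
      exact_mod_cast congrArg (Rat.cast : ℚ → ℂ) (Rat.mul_den_eq_num q)
    simp only [zsmul_eq_mul, h]
    push_cast
    linear_combination (-(q.den : ℂ) * x) * hp + (-(p.den : ℂ) * y) * hq

/-- If nonzero multiples of `x` and `y` lie in `H`, a common nonzero multiple of everything
in `closure {x, y}` lies in `H`. -/
lemma smul_closure_pair_le (x y : ℂ) (H : AddSubgroup ℂ) {m n : ℤ}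
    (hm : m • x ∈ H) (hn : n • y ∈ H) :
    ∀ z ∈ AddSubgroup.closure ({x, y} : Set ℂ), (m * n) • z ∈ H := by
  intro z hz
  obtain ⟨s, t, rfl⟩ := AddSubgroup.mem_closure_pair.mp hz
  have : (m * n) • (s • x + t • y) = (s * n) • (m • x) + (t * m) • (n • y) := by
    simp only [zsmul_eq_mul]
    push_cast
    ring
  rw [this]
  exact H.add_mem (H.zsmul_mem hm _) (H.zsmul_mem hn _)

/-- If a nonzero integer multiple of `closure {x,y}` lands in `H`, the relative index of `H`
in `closure {x,y}` is finite (nonzero). -/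
lemma relindex_ne_zero_of_smul_le (x y : ℂ) (H : AddSubgroup ℂ) (M : ℤ) (hM : M ≠ 0)
    (h : ∀ z ∈ AddSubgroup.closure ({x, y} : Set ℂ), M • z ∈ H) :
    H.relIndex (AddSubgroup.closure ({x, y} : Set ℂ)) ≠ 0 := by
  set K := AddSubgroup.closure ({x, y} : Set ℂ) with hK
  haveI : Finite (({x, y} : Set ℂ)) := Set.Finite.to_subtype ((Set.finite_singleton y).insert x)
  haveI : AddGroup.FG K := AddGroup.closure_finite_fg _
  haveI : Finite (K ⧸ (H.addSubgroupOf K)) := by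
    apply AddCommGroup.finite_of_fg_torsion
    intro g
    obtain ⟨z, rfl⟩ := QuotientAddGroup.mk'_surjective _ g
    refine isOfFinAddOrder_iff_nsmul_eq_zero.mpr ⟨M.natAbs, Int.natAbs_pos.mpr hM, ?_⟩
    rw [← map_nsmul]
    have hz : M • (z : ℂ) ∈ H := h z z.2
    have hz' : (M.natAbs : ℤ) • (z : ℂ) ∈ H := by
      rcases Int.natAbs_eq M with hM' | hM'
      · rwa [← hM']
      · have : (M.natAbs : ℤ) • (z : ℂ) = -(M • (z : ℂ)) := by
          rw [hM', neg_zsmul, neg_neg]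
          simp
        rw [this]
        exact H.neg_mem hz
    have hmem : M.natAbs • z ∈ H.addSubgroupOf K := by
      rw [AddSubgroup.mem_addSubgroupOf]
      push_cast
      rw [← natCast_zsmul]
      exact hz'
    exact (QuotientAddGroup.eq_zero_iff _).mpr hmem
  exact AddSubgroup.index_ne_zero_of_finite

/-- Two additive subgroups `L, L'` of `ℂ` (lattices) are isogenous: for some `c ∈ ℂ*`,
`c·L` and `L'` are commensurable. -/
def LatticeIsog (L L' : AddSubgroup ℂ) : Prop :=
  ∃ c : ℂ, c ≠ 0 ∧
    L'.relIndex (L.map (AddMonoidHom.mulLeft c)) ≠ 0 ∧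
    (L.map (AddMonoidHom.mulLeft c)).relIndex L' ≠ 0

/-- Two lattices `Λ = ℤα + ℤβ` and `Γ = ℤγ + ℤδ` in `ℂ` are isogenous iff the natural map
`Λ_ℚ ⊗_ℚ Γ_ℚ → ℂ` has nonzero kernel, i.e. iff there is
`(a,b,c,d) ∈ ℚ⁴ \ {0}` with `a·αγ + b·αδ + c·βγ + d·βδ = 0`. -/
theorem latticeIsog_iff_exists_rational_relation
    (Λ Γ : AddSubgroup ℂ) (α β γ δ : ℂ)
    (hαβ : LinearIndependent ℝ ![α, β]) (hΛ : Λ = AddSubgroup.closure {α, β})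
    (hγδ : LinearIndependent ℝ ![γ, δ]) (hΓ : Γ = AddSubgroup.closure {γ, δ}) :
    LatticeIsog Λ Γ ↔
      ∃ a b c d : ℚ, (a, b, c, d) ≠ (0, 0, 0, 0) ∧
        (a : ℂ) * (α * γ) + (b : ℂ) * (α * δ) + (c : ℂ) * (β * γ) + (d : ℂ) * (β * δ) = 0 := by
  have hα0 : α ≠ 0 := by simpa using hαβ.ne_zero 0
  have hβ0 : β ≠ 0 := by simpa using hαβ.ne_zero 1
  constructor
  · rintro ⟨c, hc, h1, h2⟩
    set K := Λ.map (AddMonoidHom.mulLeft c) with hK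
    haveI : (Γ.addSubgroupOf K).FiniteIndex := ⟨h1⟩
    have hαΛ : α ∈ Λ := by rw [hΛ]; exact AddSubgroup.subset_closure (by simp)
    have hβΛ : β ∈ Λ := by rw [hΛ]; exact AddSubgroup.subset_closure (by simp)
    set n := Γ.relIndex K with hn
    have key : ∀ z : K, (n • (z : ℂ)) ∈ Γ := by
      intro z
      have h3 := AddSubgroup.nsmul_index_mem (Γ.addSubgroupOf K) z
      rw [AddSubgroup.mem_addSubgroupOf] at h3
      simpa [hn, AddSubgroup.relIndex] using h3
    have hcα : c * α ∈ K := ⟨α, hαΛ, rfl⟩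
    have hcβ : c * β ∈ K := ⟨β, hβΛ, rfl⟩
    have h4 := key ⟨c * α, hcα⟩
    have h5 := key ⟨c * β, hcβ⟩
    rw [hΓ] at h4 h5
    obtain ⟨p, q, hpq⟩ := AddSubgroup.mem_closure_pair.mp h4
    obtain ⟨r, s, hrs⟩ := AddSubgroup.mem_closure_pair.mp h5
    have hpq' : (p : ℂ) * γ + (q : ℂ) * δ = (n : ℂ) * (c * α) := by
      simpa [zsmul_eq_mul, nsmul_eq_mul] using hpq
    have hrs' : (r : ℂ) * γ + (s : ℂ) * δ = (n : ℂ) * (c * β) := by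
      simpa [zsmul_eq_mul, nsmul_eq_mul] using hrs
    have hn0 : (n : ℂ) ≠ 0 := Nat.cast_ne_zero.mpr h1
    refine ⟨(r : ℚ), (s : ℚ), (-p : ℚ), (-q : ℚ), ?_, ?_⟩
    · intro heq
      rw [Prod.mk.injEq, Prod.mk.injEq, Prod.mk.injEq] at heq
      obtain ⟨h6, h7, h8, h9⟩ := heq
      have hr : r = 0 := by exact_mod_cast h6
      have hs : s = 0 := by exact_mod_cast h7
      rw [hr, hs] at hrs'
      simp only [Int.cast_zero, zero_mul, add_zero, zero_add] at hrs'
      exact (mul_ne_zero hn0 (mul_ne_zero hc hβ0)) hrs'.symm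
    · push_cast
      linear_combination α * hrs' - β * hpq'
  · rintro ⟨a, b, c, d, hne, hrel⟩
    have hQαβ := ratIndepAux hαβ
    have hQγδ := ratIndepAux hγδ
    have he : (a : ℂ) * γ + (b : ℂ) * δ ≠ 0 := by
      intro h0
      obtain ⟨ha, hb⟩ := hQγδ a b h0
      have hf : (c : ℂ) * γ + (d : ℂ) * δ = 0 := by
        have h0' : β * ((c : ℂ) * γ + (d : ℂ) * δ) = 0 := by
          rw [ha, hb] at hrel
          push_cast at hrel
          linear_combination hrel
        exact (mul_eq_zero.mp h0').resolve_left hβ0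
      obtain ⟨hc, hd⟩ := hQγδ c d hf
      exact hne (by simp [ha, hb, hc, hd])
    have hD : a * d - b * c ≠ 0 := by
      intro h0
      have h0' : (a : ℂ) * (d : ℂ) = (b : ℂ) * (c : ℂ) := by
        have := sub_eq_zero.mp h0
        exact_mod_cast congrArg (Rat.cast : ℚ → ℂ) this
      have h1' : ((a : ℂ) * α + (c : ℂ) * β) * ((a : ℂ) * γ + (b : ℂ) * δ) = 0 := by
        linear_combination (a : ℂ) * hrel - β * δ * h0'
      have h2' : ((b : ℂ) * α + (d : ℂ) * β) * ((a : ℂ) * γ + (b : ℂ) * δ) = 0 := by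
        linear_combination (b : ℂ) * hrel + β * γ * h0'
      obtain ⟨ha0, hc0⟩ := hQαβ a c ((mul_eq_zero.mp h1').resolve_right he)
      obtain ⟨hb0, hd0⟩ := hQαβ b d ((mul_eq_zero.mp h2').resolve_right he)
      exact hne (by simp [ha0, hb0, hc0, hd0])
    have hDC : ((a * d - b * c : ℚ) : ℂ) ≠ 0 := by exact_mod_cast hD
    set c₀ : ℂ := ((a : ℂ) * γ + (b : ℂ) * δ) / β with hc₀def
    have hc₀0 : c₀ ≠ 0 := div_ne_zero he hβ0
    have hc₀β : c₀ * β = (a : ℂ) * γ + (b : ℂ) * δ := div_mul_cancel₀ _ hβ0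
    have hc₀α : c₀ * α = ((-c : ℚ) : ℂ) * γ + ((-d : ℚ) : ℂ) * δ := by
      rw [hc₀def]
      push_cast
      field_simp
      linear_combination hrel
    have hc₀β' : c₀ * β = ((a : ℚ) : ℂ) * γ + ((b : ℚ) : ℂ) * δ := by
      exact hc₀β
    have hK' : Λ.map (AddMonoidHom.mulLeft c₀) =
        AddSubgroup.closure ({c₀ * α, c₀ * β} : Set ℂ) := by
      rw [hΛ, AddMonoidHom.map_closure]
      congr 1
      rw [Set.image_insert_eq, Set.image_singleton]
      simp [AddMonoidHom.coe_mulLeft]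
    refine ⟨c₀, hc₀0, ?_, ?_⟩
    · rw [hK']
      obtain ⟨m, hm0, hm⟩ := zsmul_mem_closure_pair γ δ (c₀ * α) (-c) (-d) hc₀α
      obtain ⟨k, hk0, hk⟩ := zsmul_mem_closure_pair γ δ (c₀ * β) a b hc₀β'
      rw [← hΓ] at hm hk
      exact relindex_ne_zero_of_smul_le _ _ _ (m * k) (mul_ne_zero hm0 hk0)
        (smul_closure_pair_le _ _ _ hm hk)
    · rw [hK', hΓ]
      have hDC' : (a : ℂ) * (d : ℂ) - (b : ℂ) * (c : ℂ) ≠ 0 := by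
        have h' := hDC
        push_cast at h'
        exact h'
      have keyγ : ((a * d - b * c : ℚ) : ℂ) * γ =
          (b : ℂ) * (c₀ * α) + (d : ℂ) * (c₀ * β) := by
        rw [hc₀α, hc₀β']
        push_cast
        ring
      have keyδ : ((a * d - b * c : ℚ) : ℂ) * δ =
          (-(a : ℂ)) * (c₀ * α) + (-(c : ℂ)) * (c₀ * β) := by
        rw [hc₀α, hc₀β']
        push_cast
        ring
      have e1 : (a * d - b * c) * (b / (a * d - b * c)) = b :=
        (mul_comm _ _).trans (div_mul_cancel₀ _ hD)
      have e2 : (a * d - b * c) * (d / (a * d - b * c)) = d :=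
        (mul_comm _ _).trans (div_mul_cancel₀ _ hD)
      have e3 : (a * d - b * c) * (-a / (a * d - b * c)) = -a :=
        (mul_comm _ _).trans (div_mul_cancel₀ _ hD)
      have e4 : (a * d - b * c) * (-c / (a * d - b * c)) = -c :=
        (mul_comm _ _).trans (div_mul_cancel₀ _ hD)
      have f1 : ((a * d - b * c : ℚ) : ℂ) * ((b / (a * d - b * c) : ℚ) : ℂ) = (b : ℂ) := by
        exact_mod_cast congrArg (fun q : ℚ => (q : ℂ)) e1
      have f2 : ((a * d - b * c : ℚ) : ℂ) * ((d / (a * d - b * c) : ℚ) : ℂ) = (d : ℂ) := by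
        exact_mod_cast congrArg (fun q : ℚ => (q : ℂ)) e2
      have f3 : ((a * d - b * c : ℚ) : ℂ) * ((-a / (a * d - b * c) : ℚ) : ℂ) = -(a : ℂ) := by
        exact_mod_cast congrArg (fun q : ℚ => (q : ℂ)) e3
      have f4 : ((a * d - b * c : ℚ) : ℂ) * ((-c / (a * d - b * c) : ℚ) : ℂ) = -(c : ℂ) := by
        exact_mod_cast congrArg (fun q : ℚ => (q : ℂ)) e4
      have hγ : γ = ((b / (a * d - b * c) : ℚ) : ℂ) * (c₀ * α) +
          ((d / (a * d - b * c) : ℚ) : ℂ) * (c₀ * β) := by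
        refine (mul_left_cancel₀ hDC ?_).symm
        linear_combination (c₀ * α) * f1 + (c₀ * β) * f2 - keyγ
      have hδ : δ = ((-a / (a * d - b * c) : ℚ) : ℂ) * (c₀ * α) +
          ((-c / (a * d - b * c) : ℚ) : ℂ) * (c₀ * β) := by
        refine (mul_left_cancel₀ hDC ?_).symm
        linear_combination (c₀ * α) * f3 + (c₀ * β) * f4 - keyδ
      obtain ⟨m, hm0, hm⟩ := zsmul_mem_closure_pair (c₀ * α) (c₀ * β) γ _ _ hγ
      obtain ⟨k, hk0, hk⟩ := zsmul_mem_closure_pair (c₀ * α) (c₀ * β) δ _ _ hδ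
      exact relindex_ne_zero_of_smul_le _ _ _ (m * k) (mul_ne_zero hm0 hk0)
        (smul_closure_pair_le _ _ _ hm hk)
end

section
/- For a lattice Λ = ℤα + ℤβ in ℂ, let K_Λ denote the subfield ℚ(α/β) of ℂ. Then: (1) K_Λ depends only on Λ and not on the choice of the basis (α,β); and (2) if Λ and Λ' are lattices in ℂ and K_Λ has positive transcendence degree over ℚ (i.e. α/β is transcendental), then Λ and Λ' are isogenous if and only if K_Λ = K_{Λ'}. -/
open Polynomial IntermediateField

private lemma sum_strip {P Q : ℚ[X]} (n : ℕ) (d : ℕ → ℚ[X]) :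
    (∑ i ∈ Finset.range (n + 2), d i * P ^ i * Q ^ (n + 1 - i)) =
      P * (∑ i ∈ Finset.range (n + 1), d (i + 1) * P ^ i * Q ^ (n - i)) + d 0 * Q ^ (n + 1) := by
  rw [Finset.sum_range_succ' (fun i => d i * P ^ i * Q ^ (n + 1 - i)) (n + 1)]
  simp only [pow_zero, Nat.succ_sub_succ, Nat.sub_zero]
  rw [Finset.mul_sum]
  congr 1
  · refine Finset.sum_congr rfl fun i _ => ?_
    ring
  · ring

private lemma deg_le_one_aux {P Q : ℚ[X]} (hcop : IsCoprime P Q) (hP : P ≠ 0) :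
    ∀ (n : ℕ) (d : ℕ → ℚ[X]), (∀ i, (d i).natDegree ≤ 1) → (∃ i, i ≤ n ∧ d i ≠ 0) →
      (∑ i ∈ Finset.range (n + 1), d i * P ^ i * Q ^ (n - i)) = 0 → P.natDegree ≤ 1 := by
  intro n
  induction n with
  | zero =>
    rintro d hd ⟨i, hi, hne⟩ hsum
    interval_cases i
    simp only [zero_add, Finset.sum_range_one, pow_zero, mul_one, one_mul, Nat.sub_zero] at hsum
    exact absurd hsum hne
  | succ n ih =>
    rintro d hd ⟨i, hi, hne⟩ hsum
    rw [sum_strip] at hsum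
    by_cases h0 : d 0 = 0
    · rw [h0, zero_mul, add_zero, mul_eq_zero] at hsum
      rcases hsum with h | hsum
      · exact absurd h hP
      · obtain ⟨j, rfl⟩ : ∃ j, i = j + 1 := by
          cases i with
          | zero => exact absurd h0 hne
          | succ j => exact ⟨j, rfl⟩
        exact ih (fun k => d (k + 1)) (fun k => hd _) ⟨j, Nat.lt_succ_iff.mp hi, hne⟩ hsum
    · have hdvd : P ∣ d 0 * Q ^ (n + 1) := by
        refine ⟨-(∑ i ∈ Finset.range (n + 1), d (i + 1) * P ^ i * Q ^ (n - i)), ?_⟩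
        linear_combination hsum
      exact le_trans (Polynomial.natDegree_le_of_dvd
        ((hcop.pow_right (n := n + 1)).dvd_of_dvd_mul_right hdvd) h0) (hd 0)

private lemma deg_le_one_aux' {P Q : ℚ[X]} (hcop : IsCoprime P Q) (hP : P ≠ 0) (hQ : Q ≠ 0)
    (n : ℕ) (d : ℕ → ℚ[X]) (hd : ∀ i, (d i).natDegree ≤ 1) (hex : ∃ i, i ≤ n ∧ d i ≠ 0)
    (hsum : (∑ i ∈ Finset.range (n + 1), d i * P ^ i * Q ^ (n - i)) = 0) :
    P.natDegree ≤ 1 ∧ Q.natDegree ≤ 1 := by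
  refine ⟨deg_le_one_aux hcop hP n d hd hex hsum, ?_⟩
  have hsum' : (∑ i ∈ Finset.range (n + 1), d (n - i) * Q ^ i * P ^ (n - i)) = 0 := by
    have key := Finset.sum_range_reflect (fun j => d (n - j) * Q ^ j * P ^ (n - j)) (n + 1)
    simp only [Nat.add_sub_cancel] at key
    rw [← key, ← hsum]
    refine Finset.sum_congr rfl fun j hj => ?_
    rw [Finset.mem_range, Nat.lt_succ_iff] at hj
    rw [Nat.sub_sub_self hj]
    ring
  refine deg_le_one_aux hcop.symm hQ n (fun i => d (n - i)) (fun i => hd _) ?_ hsum'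
  obtain ⟨i, hi, hne⟩ := hex
  exact ⟨n - i, Nat.sub_le _ _, by show d (n - (n - i)) ≠ 0; rwa [Nat.sub_sub_self hi]⟩

private lemma transcendental_of_mem {τ' x : ℂ} (hx : x ∈ IntermediateField.adjoin ℚ {τ'})
    (htr : Transcendental ℚ x) : Transcendental ℚ τ' := by
  intro halg
  apply htr
  haveI := IntermediateField.isAlgebraic_adjoin_simple halg.isIntegral (K := ℚ) (L := ℂ)
  obtain ⟨p, hp0, hp⟩ := this.isAlgebraic (⟨x, hx⟩ : ℚ⟮τ'⟯)
  refine ⟨p, hp0, ?_⟩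
  have := Polynomial.aeval_algHom_apply (ℚ⟮τ'⟯.val) (⟨x, hx⟩ : ℚ⟮τ'⟯) p
  erw [hp] at this
  simpa using this

private lemma moebius {τ τ' : ℂ} (htr : Transcendental ℚ τ)
    (heq : IntermediateField.adjoin ℚ {τ} = IntermediateField.adjoin ℚ {τ'}) :
    ∃ a b c d : ℚ, a * d - b * c ≠ 0 ∧ ((c : ℂ) * τ + d) ≠ 0 ∧
      τ' = ((a : ℂ) * τ + b) / ((c : ℂ) * τ + d) := by
  have hτmem : τ ∈ IntermediateField.adjoin ℚ {τ'} := heq ▸ mem_adjoin_simple_self ℚ τ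
  have htr' : Transcendental ℚ τ' := transcendental_of_mem hτmem htr
  have hτ'0 : τ' ≠ 0 := fun h => htr' (h ▸ isAlgebraic_zero)
  have hτ0 : τ ≠ 0 := fun h => htr (h ▸ isAlgebraic_zero)
  obtain ⟨r, s, hrs⟩ := (mem_adjoin_simple_iff ℚ τ').mp (heq.symm ▸ mem_adjoin_simple_self ℚ τ')
  have hsτ : aeval τ s ≠ 0 := fun h => hτ'0 (by rw [hrs, h, div_zero])
  have hs : s ≠ 0 := fun h => hsτ (by rw [h, map_zero])
  classical
  set g := EuclideanDomain.gcd r s with hg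
  have hg0 : g ≠ 0 := fun h => hs ((EuclideanDomain.gcd_eq_zero_iff.mp h).2)
  obtain ⟨P, hr1⟩ : g ∣ r := EuclideanDomain.gcd_dvd_left r s
  obtain ⟨Q, hs1⟩ : g ∣ s := EuclideanDomain.gcd_dvd_right r s
  have hcop : IsCoprime P Q := by
    have hb := EuclideanDomain.gcd_eq_gcd_ab r s
    refine ⟨EuclideanDomain.gcdA r s, EuclideanDomain.gcdB r s, ?_⟩
    have h2 : g * (EuclideanDomain.gcdA r s * P + EuclideanDomain.gcdB r s * Q) = g * 1 := by
      rw [mul_one]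
      linear_combination -hb - EuclideanDomain.gcdA r s * hr1 - EuclideanDomain.gcdB r s * hs1
    exact mul_left_cancel₀ hg0 h2
  have hgτ : aeval τ g ≠ 0 := fun h => hg0 (transcendental_iff.mp htr g h)
  have hQ : Q ≠ 0 := fun h => hs (by rw [hs1, h, mul_zero])
  have hQτ : aeval τ Q ≠ 0 := fun h => hQ (transcendental_iff.mp htr Q h)
  have hτ' : τ' = aeval τ P / aeval τ Q := by
    rw [hrs, hr1, hs1, map_mul, map_mul, mul_div_mul_left _ _ hgτ]
  have hPτ : aeval τ P ≠ 0 := fun h => hτ'0 (by rw [hτ', h, zero_div])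
  have hP : P ≠ 0 := fun h => hPτ (by rw [h, map_zero])
  obtain ⟨A, B, hAB⟩ := (mem_adjoin_simple_iff ℚ τ).mp hτmem
  have hBτ' : aeval τ' B ≠ 0 := fun h => hτ0 (by rw [hAB, h, div_zero])
  have hB : B ≠ 0 := fun h => hBτ' (by rw [h, map_zero])
  have hkey : aeval τ' A = τ * aeval τ' B := by
    rw [hAB, div_mul_cancel₀ _ hBτ']
  set n := max A.natDegree B.natDegree with hn
  have key : ∀ C : ℚ[X], C.natDegree ≤ n →
      aeval τ (∑ i ∈ Finset.range (n + 1), Polynomial.C (C.coeff i) * P ^ i * Q ^ (n - i)) =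
        aeval τ' C * (aeval τ Q) ^ n := by
    intro C hC
    rw [Polynomial.aeval_eq_sum_range' (Nat.lt_succ_of_le hC) τ', Finset.sum_mul, map_sum]
    refine Finset.sum_congr rfl fun i hi => ?_
    rw [Finset.mem_range, Nat.lt_succ_iff] at hi
    rw [map_mul, map_mul, map_pow, map_pow, aeval_C, Rat.smul_def, hτ']
    have hqsplit : (aeval τ Q) ^ n = (aeval τ Q) ^ i * (aeval τ Q) ^ (n - i) := by
      rw [← pow_add, Nat.add_sub_cancel' hi]
    rw [div_pow, hqsplit]
    field_simp
    exact eq_ratCast _ _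
  set T := (∑ i ∈ Finset.range (n + 1), Polynomial.C (A.coeff i) * P ^ i * Q ^ (n - i)) -
      Polynomial.X * (∑ i ∈ Finset.range (n + 1), Polynomial.C (B.coeff i) * P ^ i * Q ^ (n - i))
    with hTdef
  have hT : aeval τ T = 0 := by
    rw [hTdef, map_sub, map_mul, aeval_X, key A (le_max_left _ _), key B (le_max_right _ _), hkey]
    ring
  have hT0 : T = 0 := transcendental_iff.mp htr T hT
  have hTsum : (∑ i ∈ Finset.range (n + 1),
      (Polynomial.C (A.coeff i) - Polynomial.X * Polynomial.C (B.coeff i)) * P ^ i * Q ^ (n - i))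
        = 0 := by
    rw [← hT0, hTdef, Finset.mul_sum, ← Finset.sum_sub_distrib]
    refine Finset.sum_congr rfl fun i _ => ?_
    ring
  have hdeg := deg_le_one_aux' hcop hP hQ n
      (fun i => Polynomial.C (A.coeff i) - Polynomial.X * Polynomial.C (B.coeff i))
      (fun i => by
        refine le_trans (Polynomial.natDegree_sub_le _ _) ?_
        simp only [max_le_iff, Polynomial.natDegree_C, Nat.zero_le, true_and]
        exact le_trans (Polynomial.natDegree_mul_le) (by simp))
      ⟨B.natDegree, le_max_right _ _, by
        intro h
        have h1 := congrArg (fun p => Polynomial.coeff p 1) h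
        simp only [Polynomial.coeff_sub, Polynomial.coeff_X_mul, Polynomial.coeff_C,
          Polynomial.coeff_zero] at h1
        rw [sub_eq_zero] at h1
        exact Polynomial.leadingCoeff_ne_zero.mpr hB (by simpa using h1.symm)⟩
      hTsum
  obtain ⟨a, b, hPab⟩ := Polynomial.exists_eq_X_add_C_of_natDegree_le_one hdeg.1
  obtain ⟨c, d, hQcd⟩ := Polynomial.exists_eq_X_add_C_of_natDegree_le_one hdeg.2
  have hcast : ∀ q : ℚ, algebraMap ℚ ℂ q = (q : ℂ) := fun q => eq_ratCast _ q
  have halg : ∀ q : ℚ, IsAlgebraic ℚ ((q : ℂ)) := fun q => by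
    rw [← hcast q]; exact isAlgebraic_algebraMap q
  have hPv : aeval τ P = (a : ℂ) * τ + (b : ℂ) := by
    rw [hPab]; simp only [map_add, map_mul, aeval_C, aeval_X, hcast]
  have hQv : aeval τ Q = (c : ℂ) * τ + (d : ℂ) := by
    rw [hQcd]; simp only [map_add, map_mul, aeval_C, aeval_X, hcast]
  have hden : (c : ℂ) * τ + (d : ℂ) ≠ 0 := hQv ▸ hQτ
  have hτ'2 : τ' = ((a : ℂ) * τ + b) / ((c : ℂ) * τ + d) := by rw [hτ', hPv, hQv]
  refine ⟨a, b, c, d, ?_, hden, hτ'2⟩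
  intro h0
  apply htr'
  by_cases hc : c = 0
  · have hd0 : d ≠ 0 := by
      intro h; apply hQ; rw [hQcd, hc, h]; simp
    have ha : a = 0 := by
      rw [hc, mul_zero, sub_zero, mul_eq_zero] at h0
      exact h0.resolve_right hd0
    have hv : τ' = ((b / d : ℚ) : ℂ) := by
      rw [hτ'2, ha, hc]
      push_cast
      simp
    rw [hv]; exact halg _
  · have hc' : (c : ℂ) ≠ 0 := by exact_mod_cast hc
    have h0' : (a : ℂ) * d - (b : ℂ) * c = 0 := by exact_mod_cast congrArg (fun q : ℚ => (q : ℂ)) h0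
    have hv : τ' = ((a / c : ℚ) : ℂ) := by
      rw [hτ'2]
      push_cast
      rw [div_eq_div_iff hden hc']
      linear_combination -h0'
    rw [hv]; exact halg _

private lemma relindex_ne_zero_of_gen {H K : AddSubgroup ℂ} {x y : ℂ}
    (hK : K = AddSubgroup.closure {x, y}) {n : ℕ} (hn : 0 < n)
    (hx : n • x ∈ H) (hy : n • y ∈ H) : H.relIndex K ≠ 0 := by
  have hall : ∀ z ∈ K, n • z ∈ H := by
    rw [hK]
    intro z hz
    induction hz using AddSubgroup.closure_induction with
    | mem w hw =>
      rcases hw with h | h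
      · subst h; exact hx
      · rw [Set.mem_singleton_iff] at h; subst h; exact hy
    | zero => simpa using H.zero_mem
    | add w v _ _ hw hv => rw [smul_add]; exact H.add_mem hw hv
    | neg w _ hw => rw [smul_neg]; exact H.neg_mem hw
  have htor : ∀ q : K ⧸ (H.addSubgroupOf K), n • q = 0 := by
    intro q
    induction q using QuotientAddGroup.induction_on with
    | H z =>
      rw [← QuotientAddGroup.mk_nsmul, QuotientAddGroup.eq_zero_iff,
        AddSubgroup.mem_addSubgroupOf]
      push_cast
      exact hall _ z.2
  haveI : Finite ({x, y} : Set ℂ) := ((Set.finite_singleton y).insert x).to_subtype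
  haveI : AddGroup.FG K := by rw [hK]; infer_instance
  haveI : Finite (K ⧸ (H.addSubgroupOf K)) :=
    AddCommGroup.finite_of_fg_torsion _
      (fun q => isOfFinAddOrder_iff_nsmul_eq_zero.mpr ⟨n, hn, htor q⟩)
  exact AddSubgroup.index_ne_zero_of_finite

private lemma nsmul_mem_of_relindex {H K : AddSubgroup ℂ} {z : ℂ} (hz : z ∈ K) :
    (H.relIndex K) • z ∈ H := by
  have h := AddSubgroup.nsmul_index_mem (H.addSubgroupOf K) (⟨z, hz⟩ : K)
  rw [AddSubgroup.mem_addSubgroupOf] at h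
  push_cast at h
  exact h

private lemma int_of_den_dvd {q : ℚ} {n : ℕ} (h : (q.den : ℕ) ∣ n) :
    ∃ z : ℤ, (z : ℚ) = (n : ℚ) * q := by
  obtain ⟨k, rfl⟩ := h
  refine ⟨(k : ℤ) * q.num, ?_⟩
  have hden : ((q.den : ℚ)) ≠ 0 := by exact_mod_cast q.den_ne_zero
  have hq := (div_eq_iff hden).mp (Rat.num_div_den q)
  push_cast
  rw [hq]
  ring

private lemma div_mem_adjoin_of_comb {x y x' y' s : ℂ} (hy : y ≠ 0) (hy' : y' ≠ 0) (hs : s ≠ 0)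
    {a b e f : ℤ} (h1 : s * x' = a • x + b • y) (h2 : s * y' = e • x + f • y) :
    x' / y' ∈ IntermediateField.adjoin ℚ {x / y} := by
  rw [zsmul_eq_mul, zsmul_eq_mul] at h1 h2
  have hsy' : s * y' ≠ 0 := mul_ne_zero hs hy'
  have hEq1 : ((a : ℂ) * (x / y) + b) * y = s * x' := by rw [h1]; field_simp
  have hEq2 : ((e : ℂ) * (x / y) + f) * y = s * y' := by rw [h2]; field_simp
  have hden : (e : ℂ) * (x / y) + f ≠ 0 := by
    intro h
    apply hsy'
    rw [← hEq2, h, zero_mul]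
  have hval : x' / y' = ((a : ℂ) * (x / y) + b) / ((e : ℂ) * (x / y) + f) := by
    rw [div_eq_div_iff hy' hden]
    have h3 : x' * (((e : ℂ) * (x / y) + f) * y) = (((a : ℂ) * (x / y) + b) * y) * y' := by
      rw [hEq1, hEq2]; ring
    exact mul_right_cancel₀ hy (by linear_combination h3)
  rw [hval]
  have hτ := IntermediateField.mem_adjoin_simple_self ℚ (x / y)
  have hint : ∀ m : ℤ, ((m : ℂ)) ∈ IntermediateField.adjoin ℚ {x / y} :=
    fun m => intCast_mem _ m
  exact div_mem (add_mem (mul_mem (hint a) hτ) (hint b)) (add_mem (mul_mem (hint e) hτ) (hint f))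

/-- For a lattice `Λ = ℤα + ℤβ` in `ℂ`, the field `K_Λ = ℚ(α/β)` does not depend on the
choice of basis; and if `α/β` is transcendental, two lattices are isogenous iff they have
the same associated field. -/
theorem field_of_lattice_well_defined_and_isogeny_criterion :
    (∀ (Λ : AddSubgroup ℂ) (α β α' β' : ℂ),
      LinearIndependent ℝ ![α, β] → Λ = AddSubgroup.closure {α, β} →
      LinearIndependent ℝ ![α', β'] → Λ = AddSubgroup.closure {α', β'} →
      IntermediateField.adjoin ℚ {α / β} = IntermediateField.adjoin ℚ {α' / β'}) ∧
    (∀ (Λ Λ' : AddSubgroup ℂ) (α β α' β' : ℂ),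
      LinearIndependent ℝ ![α, β] → Λ = AddSubgroup.closure {α, β} →
      LinearIndependent ℝ ![α', β'] → Λ' = AddSubgroup.closure {α', β'} →
      Transcendental ℚ (α / β) →
      (LatticeIsog Λ Λ' ↔
        IntermediateField.adjoin ℚ {α / β} = IntermediateField.adjoin ℚ {α' / β'})) := by
  constructor
  · -- part 1 : well-definedness
    intro Λ α β α' β' hli hΛ hli' hΛ'
    have hβ : β ≠ 0 := by simpa using hli.ne_zero 1
    have hβ' : β' ≠ 0 := by simpa using hli'.ne_zero 1
    have hmem1 : α' / β' ∈ IntermediateField.adjoin ℚ {α / β} := by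
      have hα'mem : α' ∈ AddSubgroup.closure {α, β} := by
        rw [← hΛ, hΛ']; exact AddSubgroup.subset_closure (by simp)
      have hβ'mem : β' ∈ AddSubgroup.closure {α, β} := by
        rw [← hΛ, hΛ']; exact AddSubgroup.subset_closure (by simp)
      obtain ⟨a, b, hab⟩ := AddSubgroup.mem_closure_pair.mp hα'mem
      obtain ⟨e, f, hef⟩ := AddSubgroup.mem_closure_pair.mp hβ'mem
      exact div_mem_adjoin_of_comb hβ hβ' one_ne_zero
        (by rw [one_mul, ← hab]) (by rw [one_mul, ← hef])
    have hmem2 : α / β ∈ IntermediateField.adjoin ℚ {α' / β'} := by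
      have hαmem : α ∈ AddSubgroup.closure {α', β'} := by
        rw [← hΛ', hΛ]; exact AddSubgroup.subset_closure (by simp)
      have hβmem : β ∈ AddSubgroup.closure {α', β'} := by
        rw [← hΛ', hΛ]; exact AddSubgroup.subset_closure (by simp)
      obtain ⟨a, b, hab⟩ := AddSubgroup.mem_closure_pair.mp hαmem
      obtain ⟨e, f, hef⟩ := AddSubgroup.mem_closure_pair.mp hβmem
      exact div_mem_adjoin_of_comb hβ' hβ one_ne_zero
        (by rw [one_mul, ← hab]) (by rw [one_mul, ← hef])
    exact le_antisymm
      (IntermediateField.adjoin_le_iff.mpr (Set.singleton_subset_iff.mpr hmem2))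
      (IntermediateField.adjoin_le_iff.mpr (Set.singleton_subset_iff.mpr hmem1))
  · -- part 2 : isogeny criterion
    intro Λ Λ' α β α' β' hli hΛ hli' hΛ' htr
    have hβ : β ≠ 0 := by simpa using hli.ne_zero 1
    have hβ' : β' ≠ 0 := by simpa using hli'.ne_zero 1
    constructor
    · rintro ⟨c, hc, hrel1, hrel2⟩
      set M := Λ.map (AddMonoidHom.mulLeft c) with hM
      have hαΛ : α ∈ Λ := by rw [hΛ]; exact AddSubgroup.subset_closure (by simp)
      have hβΛ : β ∈ Λ := by rw [hΛ]; exact AddSubgroup.subset_closure (by simp)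
      have hα'Λ' : α' ∈ Λ' := by rw [hΛ']; exact AddSubgroup.subset_closure (by simp)
      have hβ'Λ' : β' ∈ Λ' := by rw [hΛ']; exact AddSubgroup.subset_closure (by simp)
      have hcαM : c * α ∈ M := AddSubgroup.mem_map.mpr ⟨α, hαΛ, rfl⟩
      have hcβM : c * β ∈ M := AddSubgroup.mem_map.mpr ⟨β, hβΛ, rfl⟩
      -- direction: α/β ∈ adjoin {α'/β'}
      have hmem2 : α / β ∈ IntermediateField.adjoin ℚ {α' / β'} := by
        set n1 := Λ'.relIndex M with hn1
        have h1 : n1 • (c * α) ∈ Λ' := nsmul_mem_of_relindex (H := Λ') hcαM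
        have h2 : n1 • (c * β) ∈ Λ' := nsmul_mem_of_relindex (H := Λ') hcβM
        rw [hΛ'] at h1 h2
        obtain ⟨m1, m2, hm⟩ := AddSubgroup.mem_closure_pair.mp h1
        obtain ⟨m3, m4, hm'⟩ := AddSubgroup.mem_closure_pair.mp h2
        refine div_mem_adjoin_of_comb hβ' hβ
          (mul_ne_zero (Nat.cast_ne_zero.mpr hrel1) hc) (a := m1) (b := m2) (e := m3) (f := m4)
          ?_ ?_
        · rw [hm, nsmul_eq_mul]; ring
        · rw [hm', nsmul_eq_mul]; ring
      -- direction: α'/β' ∈ adjoin {α/β}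
      have hmem1 : α' / β' ∈ IntermediateField.adjoin ℚ {α / β} := by
        set n2 := M.relIndex Λ' with hn2
        have h3 : n2 • α' ∈ M := nsmul_mem_of_relindex (H := M) hα'Λ'
        have h4 : n2 • β' ∈ M := nsmul_mem_of_relindex (H := M) hβ'Λ'
        rw [hM] at h3 h4
        obtain ⟨w, hwΛ, hw⟩ := AddSubgroup.mem_map.mp h3
        obtain ⟨v, hvΛ, hv⟩ := AddSubgroup.mem_map.mp h4
        rw [hΛ] at hwΛ hvΛ
        obtain ⟨k1, k2, hk⟩ := AddSubgroup.mem_closure_pair.mp hwΛ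
        obtain ⟨k3, k4, hk'⟩ := AddSubgroup.mem_closure_pair.mp hvΛ
        have hres : α' / β' ∈ IntermediateField.adjoin ℚ {(c * α) / (c * β)} := by
          refine div_mem_adjoin_of_comb (mul_ne_zero hc hβ) hβ'
            (Nat.cast_ne_zero.mpr hrel2 : ((M.relIndex Λ' : ℕ) : ℂ) ≠ 0)
            (a := k1) (b := k2) (e := k3) (f := k4) ?_ ?_
          · rw [← nsmul_eq_mul, ← hw, ← hk]
            show (AddMonoidHom.mulLeft c) (k1 • α + k2 • β) = _
            rw [map_add, AddMonoidHom.map_zsmul, AddMonoidHom.map_zsmul]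
            rfl
          · rw [← nsmul_eq_mul, ← hv, ← hk']
            show (AddMonoidHom.mulLeft c) (k3 • α + k4 • β) = _
            rw [map_add, AddMonoidHom.map_zsmul, AddMonoidHom.map_zsmul]
            rfl
        rwa [mul_div_mul_left α β hc] at hres
      exact le_antisymm
        (IntermediateField.adjoin_le_iff.mpr (Set.singleton_subset_iff.mpr hmem2))
        (IntermediateField.adjoin_le_iff.mpr (Set.singleton_subset_iff.mpr hmem1))
    · intro heqf
      obtain ⟨a, b, c, d, hdet, hden, hτ'⟩ := moebius htr heqf
      have hΔ : ((a : ℂ) * d - (b : ℂ) * c) ≠ 0 := by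
        intro h
        exact hdet (by exact_mod_cast h)
      set D : ℂ := (c : ℂ) * α + (d : ℂ) * β with hDdef
      have hDeq : ((c : ℂ) * (α / β) + d) * β = D := by rw [hDdef]; field_simp
      have hD : D ≠ 0 := by rw [← hDeq]; exact mul_ne_zero hden hβ
      set c₀ : ℂ := β' / D with hc₀def
      have hc₀ : c₀ ≠ 0 := div_ne_zero hβ' hD
      have R : α' * D = β' * ((a : ℂ) * α + (b : ℂ) * β) := by
        have h := hτ'
        rw [div_eq_div_iff hβ' hden] at h
        have e2 : ((a : ℂ) * (α / β) + b) * β = (a : ℂ) * α + (b : ℂ) * β := by field_simp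
        have h2 : α' * (((c : ℂ) * (α / β) + d) * β) = (((a : ℂ) * (α / β) + b) * β) * β' := by
          linear_combination β * h
        rw [hDeq, e2] at h2
        linear_combination h2
      have hx₀ : (a : ℂ) * (c₀ * α) + (b : ℂ) * (c₀ * β) = α' := by
        rw [hc₀def]
        field_simp
        linear_combination -R
      have hy₀ : (c : ℂ) * (c₀ * α) + (d : ℂ) * (c₀ * β) = β' := by
        rw [hc₀def]
        field_simp
        linear_combination -β' * hDdef
      clear hc₀def
      clear_value c₀
      have hx₀' : ((d / (a * d - b * c) : ℚ) : ℂ) * α' + ((-b / (a * d - b * c) : ℚ) : ℂ) * β'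
          = c₀ * α := by
        push_cast
        rw [div_mul_eq_mul_div, div_mul_eq_mul_div, ← add_div, div_eq_iff hΔ]
        linear_combination (b : ℂ) * hy₀ - (d : ℂ) * hx₀
      have hy₀' : ((-c / (a * d - b * c) : ℚ) : ℂ) * α' + ((a / (a * d - b * c) : ℚ) : ℂ) * β'
          = c₀ * β := by
        push_cast
        rw [div_mul_eq_mul_div, div_mul_eq_mul_div, ← add_div, div_eq_iff hΔ]
        linear_combination (c : ℂ) * hx₀ - (a : ℂ) * hy₀
      -- integer scalings
      set N1 : ℕ := a.den * (b.den * (c.den * d.den)) with hN1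
      have hN1pos : 0 < N1 := by
        exact mul_pos a.pos (mul_pos b.pos (mul_pos c.pos d.pos))
      obtain ⟨za, hza⟩ := int_of_den_dvd (q := a) (n := N1) (dvd_mul_right _ _)
      obtain ⟨zb, hzb⟩ := int_of_den_dvd (q := b) (n := N1)
        ((dvd_mul_right b.den _).mul_left a.den)
      obtain ⟨zc, hzc⟩ := int_of_den_dvd (q := c) (n := N1)
        (((dvd_mul_right c.den _).mul_left b.den).mul_left a.den)
      obtain ⟨zd, hzd⟩ := int_of_den_dvd (q := d) (n := N1)
        (((dvd_mul_left d.den c.den).mul_left b.den).mul_left a.den)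
      have hza' : (za : ℂ) = (N1 : ℂ) * (a : ℂ) := by
        exact_mod_cast congrArg (fun q : ℚ => (q : ℂ)) hza
      have hzb' : (zb : ℂ) = (N1 : ℂ) * (b : ℂ) := by
        exact_mod_cast congrArg (fun q : ℚ => (q : ℂ)) hzb
      have hzc' : (zc : ℂ) = (N1 : ℂ) * (c : ℂ) := by
        exact_mod_cast congrArg (fun q : ℚ => (q : ℂ)) hzc
      have hzd' : (zd : ℂ) = (N1 : ℂ) * (d : ℂ) := by
        exact_mod_cast congrArg (fun q : ℚ => (q : ℂ)) hzd
      set N2 : ℕ := (d / (a * d - b * c)).den * ((-b / (a * d - b * c)).den *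
        ((-c / (a * d - b * c)).den * (a / (a * d - b * c)).den)) with hN2
      have hN2pos : 0 < N2 := by
        exact mul_pos (d / (a * d - b * c)).pos (mul_pos (-b / (a * d - b * c)).pos
          (mul_pos (-c / (a * d - b * c)).pos (a / (a * d - b * c)).pos))
      obtain ⟨z1, hz1⟩ := int_of_den_dvd (q := d / (a * d - b * c)) (n := N2) (dvd_mul_right _ _)
      obtain ⟨z2, hz2⟩ := int_of_den_dvd (q := -b / (a * d - b * c)) (n := N2)
        ((dvd_mul_right _ _).mul_left _)
      obtain ⟨z3, hz3⟩ := int_of_den_dvd (q := -c / (a * d - b * c)) (n := N2)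
        (((dvd_mul_right _ _).mul_left _).mul_left _)
      obtain ⟨z4, hz4⟩ := int_of_den_dvd (q := a / (a * d - b * c)) (n := N2)
        (((dvd_mul_left _ _).mul_left _).mul_left _)
      have hz1' : (z1 : ℂ) = (N2 : ℂ) * ((d / (a * d - b * c) : ℚ) : ℂ) := by
        exact_mod_cast congrArg (fun q : ℚ => (q : ℂ)) hz1
      have hz2' : (z2 : ℂ) = (N2 : ℂ) * ((-b / (a * d - b * c) : ℚ) : ℂ) := by
        exact_mod_cast congrArg (fun q : ℚ => (q : ℂ)) hz2
      have hz3' : (z3 : ℂ) = (N2 : ℂ) * ((-c / (a * d - b * c) : ℚ) : ℂ) := by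
        exact_mod_cast congrArg (fun q : ℚ => (q : ℂ)) hz3
      have hz4' : (z4 : ℂ) = (N2 : ℂ) * ((a / (a * d - b * c) : ℚ) : ℂ) := by
        exact_mod_cast congrArg (fun q : ℚ => (q : ℂ)) hz4
      set M₀ := Λ.map (AddMonoidHom.mulLeft c₀) with hM₀
      have hNα' : N1 • α' ∈ M₀ := by
        refine AddSubgroup.mem_map.mpr ⟨za • α + zb • β, ?_, ?_⟩
        · rw [hΛ]; exact AddSubgroup.mem_closure_pair.mpr ⟨za, zb, rfl⟩
        · show c₀ * (za • α + zb • β) = N1 • α'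
          rw [zsmul_eq_mul, zsmul_eq_mul, nsmul_eq_mul, hza', hzb']
          linear_combination (N1 : ℂ) * hx₀
      have hNβ' : N1 • β' ∈ M₀ := by
        refine AddSubgroup.mem_map.mpr ⟨zc • α + zd • β, ?_, ?_⟩
        · rw [hΛ]; exact AddSubgroup.mem_closure_pair.mpr ⟨zc, zd, rfl⟩
        · show c₀ * (zc • α + zd • β) = N1 • β'
          rw [zsmul_eq_mul, zsmul_eq_mul, nsmul_eq_mul, hzc', hzd']
          linear_combination (N1 : ℂ) * hy₀
      have hM₀gen : M₀ = AddSubgroup.closure {c₀ * α, c₀ * β} := by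
        rw [hM₀, hΛ, AddMonoidHom.map_closure, Set.image_pair]
        rfl
      have hg1 : N2 • (c₀ * α) ∈ Λ' := by
        rw [hΛ']
        refine AddSubgroup.mem_closure_pair.mpr ⟨z1, z2, ?_⟩
        rw [zsmul_eq_mul, zsmul_eq_mul, nsmul_eq_mul, hz1', hz2']
        linear_combination (N2 : ℂ) * hx₀'
      have hg2 : N2 • (c₀ * β) ∈ Λ' := by
        rw [hΛ']
        refine AddSubgroup.mem_closure_pair.mpr ⟨z3, z4, ?_⟩
        rw [zsmul_eq_mul, zsmul_eq_mul, nsmul_eq_mul, hz3', hz4']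
        linear_combination (N2 : ℂ) * hy₀'
      exact ⟨c₀, hc₀, relindex_ne_zero_of_gen hM₀gen hN2pos hg1 hg2,
        relindex_ne_zero_of_gen hΛ' hN1pos hNα' hNβ'⟩
end

section
/- Assume Schanuel's conjecture. Let α₁, α₂ be algebraic complex numbers with |α₁| > 1 and |α₂| > 1, and fix logarithms log α₁, log α₂ (values of the complex logarithm). Then the lattices ℤ·2πi + ℤ·log α₁ and ℤ·2πi + ℤ·log α₂ in ℂ (whose quotients are the elliptic curves ℂ*/⟨α₁⟩ and ℂ*/⟨α₂⟩) are isogenous if and only if α₁ and α₂ are multiplicatively dependent. -/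
open Complex

/-- Schanuel's conjecture: if `x₁,…,xₙ` are `ℚ`-linearly independent complex numbers,
then among `x₁,…,xₙ,e^{x₁},…,e^{xₙ}` there are `n` algebraically independent numbers
(i.e. the transcendence degree of `ℚ(x₁,…,xₙ,e^{x₁},…,e^{xₙ})` is at least `n`). -/
def SchanuelConjecture : Prop :=
  ∀ (n : ℕ) (x : Fin n → ℂ), LinearIndependent ℚ x →
    ∃ g : Fin n → (Fin n ⊕ Fin n), Function.Injective g ∧
      AlgebraicIndependent ℚ (fun i => Sum.elim x (fun j => Complex.exp (x j)) (g i))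

/-- `x` and `y` are multiplicatively dependent. -/
def MultDep (x y : ℂ) : Prop :=
  ∃ p q : ℤ, (p, q) ≠ (0, 0) ∧ x ^ q = y ^ p

/-- If every element of `K` is sent into `H` by multiplication by a fixed positive `n`,
and `K` is finitely generated, then `H` has finite index in `K`. -/
private lemma relindex_ne_zero_of_nsmul_mem {G : Type*} [AddCommGroup G]
    (H K : AddSubgroup G) (hK : K.FG) (n : ℕ) (hn : n ≠ 0)
    (h : ∀ x ∈ K, n • x ∈ H) : H.relIndex K ≠ 0 := by
  have hfg : AddGroup.FG K := (AddGroup.fg_iff_addSubgroup_fg K).mpr hK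
  have hfin : Finite (K ⧸ H.addSubgroupOf K) := by
    refine AddCommGroup.finite_of_fg_torsion _ ?_
    intro x
    refine QuotientAddGroup.induction_on x ?_
    intro y
    rw [isOfFinAddOrder_iff_nsmul_eq_zero]
    refine ⟨n, Nat.pos_of_ne_zero hn, ?_⟩
    have : ((n • y : K) : G) ∈ H := by
      simpa using h (y : G) y.2
    rw [← QuotientAddGroup.mk_nsmul, QuotientAddGroup.eq_zero_iff]
    exact (AddSubgroup.mem_addSubgroupOf).mpr this
  exact AddSubgroup.index_ne_zero_of_finite

/-- Schanuel implies: a `ℚ`-linearly independent family whose exponentials are all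
algebraic is algebraically independent. -/
private lemma algIndep_of_schanuel (hSch : SchanuelConjecture) {n : ℕ} (x : Fin n → ℂ)
    (hli : LinearIndependent ℚ x) (halg : ∀ j, IsAlgebraic ℚ (Complex.exp (x j))) :
    AlgebraicIndependent ℚ x := by
  obtain ⟨g, hg, hAI⟩ := hSch n x hli
  have hex : ∀ i, ∃ j, g i = Sum.inl j := by
    intro i
    cases hgi : g i with
    | inl j => exact ⟨j, rfl⟩
    | inr j =>
      exfalso
      have ht := hAI.transcendental i
      rw [hgi] at ht
      exact ht (halg j)
  choose σ hσ using hex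
  have hσinj : Function.Injective σ := by
    intro i i' hii'
    apply hg
    rw [hσ, hσ, hii']
  have hσbij : Function.Bijective σ := Finite.injective_iff_bijective.mp hσinj
  let e := Equiv.ofBijective σ hσbij
  have hAI' : AlgebraicIndependent ℚ (fun i => x (σ i)) := by
    convert hAI using 1
    funext i
    rw [hσ i]
    rfl
  have h2 := hAI'.comp e.symm e.symm.injective
  convert h2 using 1
  funext i
  show x i = x (σ (e.symm i))
  have : σ (e.symm i) = e (e.symm i) := rfl
  rw [this, e.apply_symm_apply]

private lemma num_cast_eq (q : ℚ) : (q.num : ℚ) = q * q.den := by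
  have hden : ((q.den : ℚ)) ≠ 0 := by exact_mod_cast q.den_ne_zero
  exact (div_eq_iff hden).mp (Rat.num_div_den q)

/-- If `α₁, α₂` are multiplicatively independent (and nonzero), then
`2πi, l₁, l₂` are `ℚ`-linearly independent. -/
private lemma li_of_not_multDep (α₁ α₂ l₁ l₂ : ℂ)
    (hα₂ : α₂ ≠ 0)
    (hl₁ : Complex.exp l₁ = α₁) (hl₂ : Complex.exp l₂ = α₂)
    (hMD : ¬ MultDep α₁ α₂) :
    LinearIndependent ℚ ![2 * Real.pi * Complex.I, l₁, l₂] := by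
  have hτ : (2 * Real.pi * Complex.I : ℂ) ≠ 0 := by
    simp [Real.pi_ne_zero, Complex.I_ne_zero]
  have key : ∀ a b c : ℤ,
      (a : ℂ) * (2 * Real.pi * Complex.I) + (b : ℂ) * l₁ + (c : ℂ) * l₂ = 0 →
      a = 0 ∧ b = 0 ∧ c = 0 := by
    intro a b c habc
    have hexp : Complex.exp ((a : ℂ) * (2 * Real.pi * Complex.I)
        + (b : ℂ) * l₁ + (c : ℂ) * l₂) = 1 := by
      rw [habc, Complex.exp_zero]
    rw [Complex.exp_add, Complex.exp_add, Complex.exp_int_mul_two_pi_mul_I, one_mul,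
      Complex.exp_int_mul, Complex.exp_int_mul, hl₁, hl₂] at hexp
    have hbc : b = 0 ∧ c = 0 := by
      by_contra hcon
      apply hMD
      refine ⟨-c, b, ?_, ?_⟩
      · intro hpair
        apply hcon
        have h1 := congrArg Prod.fst hpair
        have h2 := congrArg Prod.snd hpair
        simp at h1 h2
        exact ⟨h2, h1⟩
      · rw [zpow_neg]
        exact eq_inv_of_mul_eq_one_left (by linear_combination hexp)
    obtain ⟨hb, hc⟩ := hbc
    refine ⟨?_, hb, hc⟩
    rw [hb, hc] at habc
    push_cast at habc
    have h' : (a : ℂ) * (2 * Real.pi * Complex.I) = 0 := by linear_combination habc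
    have h'' : (a : ℂ) = 0 := (mul_eq_zero.mp h').resolve_right hτ
    exact_mod_cast h''
  rw [Fintype.linearIndependent_iff]
  intro g hg
  have hg' : (g 0 : ℂ) * (2 * Real.pi * Complex.I) + (g 1 : ℂ) * l₁ + (g 2 : ℂ) * l₂ = 0 := by
    have := hg
    rw [Fin.sum_univ_three] at this
    simpa [Rat.smul_def, Matrix.cons_val_zero, Matrix.cons_val_one, Matrix.head_cons] using this
  set a : ℤ := (g 0).num * ((g 1).den * (g 2).den) with ha
  set b : ℤ := (g 1).num * ((g 0).den * (g 2).den) with hb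
  set c : ℤ := (g 2).num * ((g 0).den * (g 1).den) with hc
  set d : ℚ := ((g 0).den : ℚ) * ((g 1).den : ℚ) * ((g 2).den : ℚ) with hd
  have hca : (a : ℚ) = d * g 0 := by
    rw [ha, hd]; push_cast; rw [num_cast_eq (g 0)]; ring
  have hcb : (b : ℚ) = d * g 1 := by
    rw [hb, hd]; push_cast; rw [num_cast_eq (g 1)]; ring
  have hcc : (c : ℚ) = d * g 2 := by
    rw [hc, hd]; push_cast; rw [num_cast_eq (g 2)]; ring
  have hsum : (a : ℂ) * (2 * Real.pi * Complex.I) + (b : ℂ) * l₁ + (c : ℂ) * l₂ = 0 := by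
    have e0 : ((a : ℚ) : ℂ) = (d : ℂ) * ((g 0 : ℚ) : ℂ) := by rw [hca]; push_cast; ring
    have e1 : ((b : ℚ) : ℂ) = (d : ℂ) * ((g 1 : ℚ) : ℂ) := by rw [hcb]; push_cast; ring
    have e2 : ((c : ℚ) : ℂ) = (d : ℂ) * ((g 2 : ℚ) : ℂ) := by rw [hcc]; push_cast; ring
    push_cast at e0 e1 e2 ⊢
    rw [e0, e1, e2]
    linear_combination (d : ℂ) * hg'
  obtain ⟨ha0, hb0, hc0⟩ := key a b c hsum
  intro i
  fin_cases i
  · have : (g 0).num = 0 := by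
      rcases mul_eq_zero.mp ha0 with h | h
      · exact h
      · exact absurd h (by positivity)
    exact Rat.num_eq_zero.mp this
  · have : (g 1).num = 0 := by
      rcases mul_eq_zero.mp hb0 with h | h
      · exact h
      · exact absurd h (by positivity)
    exact Rat.num_eq_zero.mp this
  · have : (g 2).num = 0 := by
      rcases mul_eq_zero.mp hc0 with h | h
      · exact h
      · exact absurd h (by positivity)
    exact Rat.num_eq_zero.mp this

/-- Assuming Schanuel's conjecture: for algebraic `α₁, α₂` with `|αᵢ| > 1` and chosen
logarithms `lᵢ`, the lattices `ℤ·2πi + ℤ·lᵢ` are isogenous iff `α₁, α₂` are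
multiplicatively dependent. -/
theorem isog_iff_multDep_of_schanuel
    (hSch : SchanuelConjecture)
    (α₁ α₂ : ℂ) (h₁ : IsAlgebraic ℚ α₁) (h₂ : IsAlgebraic ℚ α₂)
    (habs₁ : 1 < ‖α₁‖) (habs₂ : 1 < ‖α₂‖)
    (l₁ l₂ : ℂ) (hl₁ : Complex.exp l₁ = α₁) (hl₂ : Complex.exp l₂ = α₂) :
    LatticeIsog
        (AddSubgroup.closure {2 * Real.pi * Complex.I, l₁})
        (AddSubgroup.closure {2 * Real.pi * Complex.I, l₂}) ↔
      MultDep α₁ α₂ := by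
  classical
  have hα₁ : α₁ ≠ 0 := by
    intro h
    rw [h] at habs₁
    simp at habs₁
    linarith
  have hα₂ : α₂ ≠ 0 := by
    intro h
    rw [h] at habs₂
    simp at habs₂
    linarith
  have hτ : (2 * Real.pi * Complex.I : ℂ) ≠ 0 := by
    simp [Real.pi_ne_zero, Complex.I_ne_zero]
  set τ : ℂ := 2 * Real.pi * Complex.I with hτdef
  constructor
  · rintro ⟨c, hc, -, hrel2⟩
    by_contra hMD
    have hli := li_of_not_multDep α₁ α₂ l₁ l₂ hα₂ hl₁ hl₂ hMD
    have hAI : AlgebraicIndependent ℚ ![τ, l₁, l₂] := by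
      apply algIndep_of_schanuel hSch _ hli
      intro j
      fin_cases j
      · show IsAlgebraic ℚ (Complex.exp τ)
        rw [hτdef, Complex.exp_two_pi_mul_I]
        exact isAlgebraic_one
      · show IsAlgebraic ℚ (Complex.exp l₁)
        rw [hl₁]; exact h₁
      · show IsAlgebraic ℚ (Complex.exp l₂)
        rw [hl₂]; exact h₂
    set L₁ := AddSubgroup.closure ({τ, l₁} : Set ℂ) with hL₁
    set L₂ := AddSubgroup.closure ({τ, l₂} : Set ℂ) with hL₂
    set H := L₁.map (AddMonoidHom.mulLeft c) with hH
    set N := H.relIndex L₂ with hNdef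
    have hNmem : ∀ x ∈ L₂, N • x ∈ H := by
      intro x hx
      have h := AddSubgroup.nsmul_index_mem (H.addSubgroupOf L₂) (⟨x, hx⟩ : L₂)
      rw [AddSubgroup.mem_addSubgroupOf] at h
      simpa [hNdef, AddSubgroup.relIndex] using h
    have hτ2 : τ ∈ L₂ := AddSubgroup.subset_closure (by simp)
    have hl₂2 : l₂ ∈ L₂ := AddSubgroup.subset_closure (by simp)
    obtain ⟨y, hy, hcy⟩ := AddSubgroup.mem_map.mp (hNmem τ hτ2)
    obtain ⟨a, b, hab⟩ := AddSubgroup.mem_closure_pair.mp hy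
    obtain ⟨y', hy', hcy'⟩ := AddSubgroup.mem_map.mp (hNmem l₂ hl₂2)
    obtain ⟨a', b', hab'⟩ := AddSubgroup.mem_closure_pair.mp hy'
    rw [← hab] at hcy
    rw [← hab'] at hcy'
    have hcy1 : c * ((a : ℂ) * τ + (b : ℂ) * l₁) = (N : ℂ) * τ := by
      simpa [zsmul_eq_mul, nsmul_eq_mul, mul_add] using hcy
    have hcy2 : c * ((a' : ℂ) * τ + (b' : ℂ) * l₁) = (N : ℂ) * l₂ := by
      simpa [zsmul_eq_mul, nsmul_eq_mul, mul_add] using hcy'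
    have hN0 : N ≠ 0 := hrel2
    have hNQ : (N : ℚ) ≠ 0 := Nat.cast_ne_zero.mpr hN0
    have hNC : (N : ℂ) ≠ 0 := Nat.cast_ne_zero.mpr hN0
    have hcross : (N : ℂ) * l₂ * ((a : ℂ) * τ + (b : ℂ) * l₁)
        = (N : ℂ) * τ * ((a' : ℂ) * τ + (b' : ℂ) * l₁) := by
      linear_combination ((a' : ℂ) * τ + (b' : ℂ) * l₁) * hcy1
        - ((a : ℂ) * τ + (b : ℂ) * l₁) * hcy2
    have hinj := algebraicIndependent_iff.mp hAI
    set P : MvPolynomial (Fin 3) ℚ :=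
      MvPolynomial.C ((N : ℚ) * (a : ℚ)) * (MvPolynomial.X 0 * MvPolynomial.X 2)
        + MvPolynomial.C ((N : ℚ) * (b : ℚ)) * (MvPolynomial.X 1 * MvPolynomial.X 2)
        - MvPolynomial.C ((N : ℚ) * (a' : ℚ)) * (MvPolynomial.X 0 * MvPolynomial.X 0)
        - MvPolynomial.C ((N : ℚ) * (b' : ℚ)) * (MvPolynomial.X 0 * MvPolynomial.X 1)
      with hPdef
    have hPz : P = 0 := by
      apply hinj
      rw [hPdef]
      simp only [map_add, map_sub, map_mul, MvPolynomial.aeval_X, MvPolynomial.aeval_C,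
        eq_ratCast, Matrix.cons_val_zero, Matrix.cons_val_one, Matrix.head_cons,
        Matrix.cons_val_two, Matrix.tail_cons]
      push_cast
      linear_combination hcross
    have hEval := fun w : Fin 3 → ℚ => congrArg (MvPolynomial.eval w) hPz
    have h100 := hEval ![1, 0, 0]
    have h101 := hEval ![1, 0, 1]
    have h011 := hEval ![0, 1, 1]
    rw [hPdef] at h100 h101 h011
    simp [MvPolynomial.eval_X, MvPolynomial.eval_C] at h100 h101 h011
    have ha' : a' = 0 := h100.resolve_left hN0
    have ha : a = 0 := by
      rw [ha'] at h101
      push_cast at h101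
      have h0 : (N : ℚ) * (a : ℚ) = 0 := by linear_combination h101
      have := (mul_eq_zero.mp h0).resolve_left hNQ
      exact_mod_cast this
    have hb : b = 0 := h011.resolve_left hN0
    rw [ha, hb] at hcy1
    push_cast at hcy1
    simp at hcy1
    rcases hcy1 with h | h
    · exact hN0 h
    · exact hτ h
  · rintro ⟨p, q, hpq, hpow⟩
    have habs : ‖α₁‖ ^ q = ‖α₂‖ ^ p := by
      rw [← norm_zpow, ← norm_zpow, hpow]
    have hinj₁ : Function.Injective fun n : ℤ => ‖α₁‖ ^ n :=
      zpow_right_injective₀ (by linarith) (by linarith)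
    have hinj₂ : Function.Injective fun n : ℤ => ‖α₂‖ ^ n :=
      zpow_right_injective₀ (by linarith) (by linarith)
    have hq0 : q ≠ 0 := by
      intro h
      apply hpq
      have hzp : ‖α₂‖ ^ p = ‖α₂‖ ^ (0 : ℤ) := by
        rw [zpow_zero, ← habs, h, zpow_zero]
      have hp := hinj₂ hzp
      rw [hp, h]
    have hp0 : p ≠ 0 := by
      intro h
      apply hpq
      have hzq : ‖α₁‖ ^ q = ‖α₁‖ ^ (0 : ℤ) := by
        rw [zpow_zero, habs, h, zpow_zero]
      have hq := hinj₁ hzq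
      rw [hq, h]
    obtain ⟨k, hk⟩ : ∃ k : ℤ, (q : ℂ) * l₁ - (p : ℂ) * l₂ = k * (2 * Real.pi * Complex.I) := by
      rw [← Complex.exp_eq_one_iff, Complex.exp_sub, Complex.exp_int_mul,
        Complex.exp_int_mul, hl₁, hl₂, hpow]
      exact div_self (zpow_ne_zero _ hα₂)
    have hmap : ∀ L : AddSubgroup ℂ, L.map (AddMonoidHom.mulLeft (1 : ℂ)) = L := by
      intro L
      ext z
      simp [AddSubgroup.mem_map]
    refine ⟨1, one_ne_zero, ?_, ?_⟩
    · rw [hmap]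
      refine relindex_ne_zero_of_nsmul_mem _ _ ⟨{τ, l₁}, by simp⟩ q.natAbs
        (Int.natAbs_ne_zero.mpr hq0) ?_
      intro x hx
      obtain ⟨m, n, hmn⟩ := AddSubgroup.mem_closure_pair.mp hx
      have hx' : x = (m : ℂ) * τ + (n : ℂ) * l₁ := by
        rw [← hmn, zsmul_eq_mul, zsmul_eq_mul]
      have hz : q • x ∈ AddSubgroup.closure ({τ, l₂} : Set ℂ) := by
        apply AddSubgroup.mem_closure_pair.mpr
        refine ⟨q * m + n * k, n * p, ?_⟩
        rw [zsmul_eq_mul, zsmul_eq_mul, zsmul_eq_mul, hx']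
        push_cast
        linear_combination (-(n : ℂ)) * hk
      rw [← natCast_zsmul]
      have habs_eq : ((q.natAbs : ℤ)) = q ∨ ((q.natAbs : ℤ)) = -q := by omega
      rcases habs_eq with h | h
      · rw [h]; exact hz
      · rw [h, neg_zsmul]; exact neg_mem hz
    · rw [hmap]
      refine relindex_ne_zero_of_nsmul_mem _ _ ⟨{τ, l₂}, by simp⟩ p.natAbs
        (Int.natAbs_ne_zero.mpr hp0) ?_
      intro x hx
      obtain ⟨m, n, hmn⟩ := AddSubgroup.mem_closure_pair.mp hx
      have hx' : x = (m : ℂ) * τ + (n : ℂ) * l₂ := by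
        rw [← hmn, zsmul_eq_mul, zsmul_eq_mul]
      have hz : p • x ∈ AddSubgroup.closure ({τ, l₁} : Set ℂ) := by
        apply AddSubgroup.mem_closure_pair.mpr
        refine ⟨p * m - n * k, n * q, ?_⟩
        rw [zsmul_eq_mul, zsmul_eq_mul, zsmul_eq_mul, hx']
        push_cast
        linear_combination (n : ℂ) * hk
      rw [← natCast_zsmul]
      have habs_eq : ((p.natAbs : ℤ)) = p ∨ ((p.natAbs : ℤ)) = -p := by omega
      rcases habs_eq with h | h
      · rw [h]; exact hz
      · rw [h, neg_zsmul]; exact neg_mem hz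
end

section
/- Let λ₁, λ₂, λ₃ be pairwise multiplicatively independent real numbers, each greater than 1. Then it is not possible that both 4π²/(log λ₁ · log λ₂) ∈ ℚ and 4π²/(log λ₂ · log λ₃) ∈ ℚ. Consequently, among the three lattices ℤ·2πi + ℤ·log λⱼ (j = 1,2,3), no three are pairwise isogenous. -/
/-- `x` and `y` are multiplicatively independent: there is no
`(p,q) ∈ ℤ×ℤ \ {(0,0)}` with `x^q = y^p`. -/
def MultIndep {K : Type*} [DivisionRing K] (x y : K) : Prop :=
  ∀ p q : ℤ, x ^ q = y ^ p → p = 0 ∧ q = 0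

/-- The lattice `ℤ·2πi + ℤ·log λ` attached to a real number `λ > 1`. -/
noncomputable def realEigLattice (lam : ℝ) : AddSubgroup ℂ :=
  AddSubgroup.closure {2 * Real.pi * Complex.I, (Real.log lam : ℂ)}

lemma relindex_nsmul_mem {H J : AddSubgroup ℂ} {x : ℂ} (hx : x ∈ J) :
    H.relIndex J • x ∈ H := by
  have := AddSubgroup.nsmul_index_mem (H.addSubgroupOf J) ⟨x, hx⟩
  rw [AddSubgroup.mem_addSubgroupOf] at this
  simpa [AddSubgroup.relIndex] using this

lemma log_rel (a b : ℝ) (ha : 1 < a) (hb : 1 < b) (hab : MultIndep a b)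
    (p q : ℤ) (h : (q : ℝ) * Real.log a = (p : ℝ) * Real.log b) : p = 0 ∧ q = 0 := by
  have ha0 : (0:ℝ) < a := lt_trans one_pos ha
  have hb0 : (0:ℝ) < b := lt_trans one_pos hb
  apply hab p q
  have : a ^ q = Real.exp ((q:ℝ) * Real.log a) := by
    rw [← Real.log_zpow, Real.exp_log (zpow_pos ha0 q)]
  rw [this, h, ← Real.log_zpow, Real.exp_log (zpow_pos hb0 p)]

lemma isog_rat (a b : ℝ) (ha : 1 < a) (hb : 1 < b) (hab : MultIndep a b)
    (h : LatticeIsog (realEigLattice a) (realEigLattice b)) :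
    ∃ r : ℚ, 4 * Real.pi ^ 2 / (Real.log a * Real.log b) = (r : ℝ) := by
  obtain ⟨c, hc, -, hrel⟩ := h
  set N := ((realEigLattice a).map (AddMonoidHom.mulLeft c)).relIndex (realEigLattice b) with hNdef
  have hN : N ≠ 0 := hrel
  have hπ : (0:ℝ) < Real.pi := Real.pi_pos
  have hA : (0:ℝ) < Real.log a := Real.log_pos ha
  have hB : (0:ℝ) < Real.log b := Real.log_pos hb
  have hmem1 : (2 * Real.pi * Complex.I : ℂ) ∈ realEigLattice b :=
    AddSubgroup.subset_closure (by simp)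
  have hmem2 : ((Real.log b : ℝ) : ℂ) ∈ realEigLattice b :=
    AddSubgroup.subset_closure (by simp)
  have k1 := relindex_nsmul_mem (H := (realEigLattice a).map (AddMonoidHom.mulLeft c)) hmem1
  have k2 := relindex_nsmul_mem (H := (realEigLattice a).map (AddMonoidHom.mulLeft c)) hmem2
  rw [AddSubgroup.mem_map] at k1 k2
  obtain ⟨y₁, hy₁, e₁⟩ := k1
  obtain ⟨y₂, hy₂, e₂⟩ := k2
  rw [realEigLattice, AddSubgroup.mem_closure_pair] at hy₁ hy₂
  obtain ⟨m₁, n₁, rfl⟩ := hy₁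
  obtain ⟨m₂, n₂, rfl⟩ := hy₂
  rw [← hNdef] at e₁ e₂
  simp only [AddMonoidHom.coe_mulLeft, zsmul_eq_mul, nsmul_eq_mul] at e₁ e₂
  have key : ((N:ℂ) * (2 * Real.pi * Complex.I)) * ((m₂:ℂ) * (2 * Real.pi * Complex.I) + (n₂:ℂ) * (Real.log a : ℝ)) =
      ((N:ℂ) * ((Real.log b : ℝ) : ℂ)) * ((m₁:ℂ) * (2 * Real.pi * Complex.I) + (n₁:ℂ) * (Real.log a : ℝ)) := by
    rw [← e₁, ← e₂]; ring
  have hre := congrArg Complex.re key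
  have him := congrArg Complex.im key
  simp only [Complex.add_re, Complex.add_im, Complex.mul_re, Complex.mul_im, Complex.I_re,
    Complex.I_im, Complex.ofReal_re, Complex.ofReal_im, Complex.intCast_re, Complex.intCast_im,
    Complex.natCast_re, Complex.natCast_im, Complex.ofReal_mul, Complex.ofReal_ofNat,
    Complex.re_ofNat, Complex.im_ofNat] at hre him
  ring_nf at hre him
  have hNR : ((N:ℝ)) ≠ 0 := Nat.cast_ne_zero.mpr hN
  have him' : (n₂:ℝ) * Real.log a = (m₁:ℝ) * Real.log b := by
    apply mul_left_cancel₀ (show ((N:ℝ)) * Real.pi * 2 ≠ 0 by positivity)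
    linear_combination him
  have hre' : -(Real.pi ^ 2 * (m₂:ℝ) * 4) = Real.log a * Real.log b * (n₁:ℝ) := by
    apply mul_left_cancel₀ hNR
    linear_combination hre
  by_cases hn₁ : n₁ = 0
  · -- then m₂ = 0, and c is real; multiplicative dependence, contradiction
    exfalso
    have hm₂ : (m₂:ℝ) = 0 := by
      have hπ2 : (0:ℝ) < Real.pi ^ 2 := by positivity
      subst hn₁
      push_cast at hre'
      nlinarith [hre']
    have hm₂z : m₂ = 0 := by exact_mod_cast hm₂
    have hn₂ : n₂ ≠ 0 := by
      intro h0
      subst h0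
      subst hm₂z
      have hz : (N:ℂ) * ((Real.log b : ℝ) : ℂ) = 0 := by
        rw [← e₂]; push_cast; ring
      rcases mul_eq_zero.mp hz with h | h
      · exact hN (by exact_mod_cast h)
      · exact (ne_of_gt hB) (by exact_mod_cast h)
    exact hn₂ (log_rel a b ha hb hab m₁ n₂ him').2
  · -- rational case
    have hm₂ : (m₂:ℝ) ≠ 0 := by
      intro h0
      apply hn₁
      have : Real.log a * Real.log b * (n₁:ℝ) = 0 := by rw [← hre', h0]; ring
      have := (mul_eq_zero.mp this).resolve_left (by positivity)
      exact_mod_cast this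
    refine ⟨(-n₁ : ℚ) / (m₂ : ℚ), ?_⟩
    have hAB : Real.log a * Real.log b ≠ 0 := by positivity
    push_cast
    rw [div_eq_div_iff hAB hm₂]
    linear_combination (-1 : ℝ) * hre'

/-- For pairwise multiplicatively independent reals `λ₁, λ₂, λ₃ > 1`, it is impossible that
both `4π²/(log λ₁ log λ₂)` and `4π²/(log λ₂ log λ₃)` are rational; consequently the three
lattices `ℤ·2πi + ℤ·log λⱼ` are not pairwise isogenous. -/
theorem not_both_rational_and_not_pairwise_isog
    (l₁ l₂ l₃ : ℝ) (h₁ : 1 < l₁) (h₂ : 1 < l₂) (h₃ : 1 < l₃)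
    (h₁₂ : MultIndep l₁ l₂) (h₁₃ : MultIndep l₁ l₃) (h₂₃ : MultIndep l₂ l₃) :
    (¬ ((∃ r : ℚ, 4 * Real.pi ^ 2 / (Real.log l₁ * Real.log l₂) = (r : ℝ)) ∧
        (∃ r : ℚ, 4 * Real.pi ^ 2 / (Real.log l₂ * Real.log l₃) = (r : ℝ)))) ∧
    ¬ (LatticeIsog (realEigLattice l₁) (realEigLattice l₂) ∧
       LatticeIsog (realEigLattice l₂) (realEigLattice l₃) ∧
       LatticeIsog (realEigLattice l₁) (realEigLattice l₃)) := by
  have hπ : (0:ℝ) < Real.pi := Real.pi_pos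
  have A1 : (0:ℝ) < Real.log l₁ := Real.log_pos h₁
  have A2 : (0:ℝ) < Real.log l₂ := Real.log_pos h₂
  have A3 : (0:ℝ) < Real.log l₃ := Real.log_pos h₃
  have part1 : ¬ ((∃ r : ℚ, 4 * Real.pi ^ 2 / (Real.log l₁ * Real.log l₂) = (r : ℝ)) ∧
        (∃ r : ℚ, 4 * Real.pi ^ 2 / (Real.log l₂ * Real.log l₃) = (r : ℝ))) := by
    rintro ⟨⟨r, hr⟩, ⟨s, hs⟩⟩
    have hval : (0:ℝ) < 4 * Real.pi ^ 2 / (Real.log l₁ * Real.log l₂) := by positivity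
    have hval' : (0:ℝ) < 4 * Real.pi ^ 2 / (Real.log l₂ * Real.log l₃) := by positivity
    have hr0 : (r:ℝ) ≠ 0 := by rw [← hr]; exact ne_of_gt hval
    have hs0 : (s:ℝ) ≠ 0 := by rw [← hs]; exact ne_of_gt hval'
    have hL12 : Real.log l₁ * Real.log l₂ ≠ 0 := by positivity
    have hL23 : Real.log l₂ * Real.log l₃ ≠ 0 := by positivity
    have e1 : 4 * Real.pi ^ 2 = (r:ℝ) * (Real.log l₁ * Real.log l₂) := by
      rw [div_eq_iff hL12] at hr; linarith
    have e2 : 4 * Real.pi ^ 2 = (s:ℝ) * (Real.log l₂ * Real.log l₃) := by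
      rw [div_eq_iff hL23] at hs; linarith
    have e3 : (r:ℝ) * Real.log l₁ = (s:ℝ) * Real.log l₃ := by
      apply mul_right_cancel₀ (ne_of_gt A2)
      nlinarith [e1, e2]
    have e4 : ((r.num * s.den : ℤ) : ℝ) * Real.log l₁ = ((s.num * r.den : ℤ) : ℝ) * Real.log l₃ := by
      have hrc : (r:ℝ) = (r.num : ℝ) / (r.den : ℝ) := Rat.cast_def r
      have hsc : (s:ℝ) = (s.num : ℝ) / (s.den : ℝ) := Rat.cast_def s
      have hrd : ((r.den : ℝ)) ≠ 0 := Nat.cast_ne_zero.mpr r.den_nz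
      have hsd : ((s.den : ℝ)) ≠ 0 := Nat.cast_ne_zero.mpr s.den_nz
      rw [hrc, hsc] at e3
      push_cast
      field_simp at e3
      nlinarith [e3]
    obtain ⟨hp, -⟩ := log_rel l₁ l₃ h₁ h₃ h₁₃ (s.num * r.den) (r.num * s.den) e4
    have : s.num = 0 := by
      rcases mul_eq_zero.mp hp with h | h
      · exact h
      · exact absurd h (by exact_mod_cast r.den_nz)
    exact hs0 (by exact_mod_cast (Rat.num_eq_zero.mp this ▸ (Rat.cast_zero (α := ℝ))))
  refine ⟨part1, ?_⟩
  rintro ⟨i12, i23, -⟩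
  exact part1 ⟨isog_rat l₁ l₂ h₁ h₂ h₁₂ i12, isog_rat l₂ l₃ h₂ h₃ h₂₃ i23⟩
end
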